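/- arXiv:1504.03825 — 6 statements merged into one kernel-verified Lean document; each statement's English description precedes it below -/
import Mathlib

section
/- Fix t ∈ ℂ. Let F ∈ ℂ[z,ξ] satisfy F(8ξ⁻³ + 2tξ⁻¹ − z, ξ) = F(z,ξ) for all z ∈ ℂ and all ξ ≠ 0, and suppose F(0,ξ) = 0 for all ξ ∈ ℂ (i.e., F is divisible by z). Then F is divisible in ℂ[z,ξ] by E(z,ξ) = z(ξ³z − 2tξ² − 8), and the quotient F/E again satisfies (F/E)(8ξ⁻³ + 2tξ⁻¹ − z, ξ) = (F/E)(z,ξ) for all z ∈ ℂ and all ξ ≠ 0. -/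
/-!
Write `c = 8/ξ³ + 2t/ξ`, so that `τ` is the reflection `z ↦ c - z` and
`M = ξ³z - 2tξ² - 8 = ξ³(z - c)`; hence `E = z · M` is `τ`-invariant.
A `τ`-invariant `F` vanishing on `z = 0` also vanishes on `z = c`, the zero set of `M`.
Since `M = a z - b` with `a = ξ³`, `b = 2tξ² + 8`, evaluating the rescaled polynomial
`a^N F(z)` at `z = b/a` gives `M ∣ a^N F`, and `ξ` is a unit modulo `M`, so `M ∣ F`.
As `z` is prime and does not divide `M`, `E ∣ F`; the quotient is `τ`-invariant wherever
`E ≠ 0`, hence everywhere by continuity.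
-/

open MvPolynomial

theorem Matrix.exists_eq_vecCons_of_fin_one {α : Type*} (x : Fin 1 → α) : ∃ a, x = ![a] :=
  ⟨x 0, funext fun i => by fin_cases i; rfl⟩

namespace Polynomial

variable {A : Type*} [CommRing A]

theorem C_mul_X_sub_C_dvd_sub_C_eval_scaleRoots (p : A[X]) (a b : A) :
    C a * X - C b ∣ C a ^ p.natDegree * p - C ((p.scaleRoots a).eval b) := by
  have key := sub_dvd_eval_sub (C a * X) (C b) ((p.scaleRoots a).map C)
  rwa [eval_map, eval_map, scaleRoots_eval₂_mul, eval₂_C_X, eval₂_at_apply] at key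

theorem map_eval_scaleRoots {K : Type*} [Field K] (φ : A →+* K) (p : A[X]) {a : A} (b : A)
    (ha : φ a ≠ 0) :
    φ ((p.scaleRoots a).eval b) = φ a ^ p.natDegree * (p.map φ).eval (φ b / φ a) := by
  rw [← eval₂_hom, eval_map, ← scaleRoots_eval₂_mul, mul_div_cancel₀ _ ha]

end Polynomial

namespace MvPolynomial

theorem eq_zero_of_eval_eq_zero_of_eval_ne_zero {R σ : Type*} [CommRing R] [IsDomain R]
    [Infinite R] {p g : MvPolynomial σ R} (hg : g ≠ 0)
    (h : ∀ x, eval x g ≠ 0 → eval x p = 0) : p = 0 := by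
  have hgp : g * p = 0 := funext fun x => by
    by_cases hx : eval x g = 0 <;> simp [hx, h]
  exact (mul_eq_zero.1 hgp).resolve_left hg

theorem finSuccEquiv_rename_succ {R : Type*} [CommSemiring R] {n : ℕ}
    (p : MvPolynomial (Fin n) R) : finSuccEquiv R n (rename Fin.succ p) = Polynomial.C p := by
  induction p using MvPolynomial.induction_on with
  | C a => simp [finSuccEquiv_apply]
  | add p q hp hq => simp [hp, hq]
  | mul_X p i hp => simp [hp, finSuccEquiv_X_succ]

theorem dvd_of_eval_div_eq_zero {K : Type*} [Field K] [Infinite K] {n : ℕ}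
    {F : MvPolynomial (Fin (n + 1)) K} {a b : MvPolynomial (Fin n) K} (ha : a ≠ 0)
    (hab : IsCoprime (rename Fin.succ a) (rename Fin.succ a * X 0 - rename Fin.succ b))
    (hF : ∀ x, eval x a ≠ 0 → eval (Fin.cons (eval x b / eval x a) x) F = 0) :
    rename Fin.succ a * X 0 - rename Fin.succ b ∣ F := by
  set f := finSuccEquiv K n F
  have hS : (f.scaleRoots a).eval b = 0 :=
    eq_zero_of_eval_eq_zero_of_eval_ne_zero ha fun x hx => by
      rw [Polynomial.map_eval_scaleRoots (eval x) f b hx, ← eval_eq_eval_mv_eval', hF x hx,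
        mul_zero]
  have hdvd :
      rename Fin.succ a * X 0 - rename Fin.succ b ∣ rename Fin.succ a ^ f.natDegree * F := by
    rw [← map_dvd_iff (finSuccEquiv K n)]
    simpa [finSuccEquiv_rename_succ, finSuccEquiv_X_zero, hS] using
      Polynomial.C_mul_X_sub_C_dvd_sub_C_eval_scaleRoots f a b
  exact hab.pow_left.symm.dvd_of_dvd_mul_left hdvd

theorem X_zero_dvd_of_eval_zero {K : Type*} [Field K] [Infinite K] {n : ℕ}
    {F : MvPolynomial (Fin (n + 1)) K} (hF : ∀ x, eval (Fin.cons 0 x) F = 0) : X 0 ∣ F := by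
  simpa using dvd_of_eval_div_eq_zero (a := 1) (b := 0) one_ne_zero
    (by simp [isCoprime_one_left]) (by simpa using hF)

end MvPolynomial

namespace TauInvolution

variable (t : ℂ)

def IsInvariant (F : MvPolynomial (Fin 2) ℂ) : Prop :=
  ∀ z ξ : ℂ, ξ ≠ 0 → eval ![8/ξ^3 + 2*t/ξ - z, ξ] F = eval ![z, ξ] F

noncomputable def M : MvPolynomial (Fin 2) ℂ := (X 1)^3 * X 0 - C (2*t) * (X 1)^2 - 8

noncomputable def E : MvPolynomial (Fin 2) ℂ := X 0 * M t

theorem eval_M_eq_of_ne_zero {ξ : ℂ} (hξ : ξ ≠ 0) (z : ℂ) :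
    eval ![z, ξ] (M t) = ξ^3 * (z - (8/ξ^3 + 2*t/ξ)) := by
  simp only [M, map_sub, map_mul, map_pow, eval_X, eval_C, map_ofNat, Matrix.cons_val_zero,
    Matrix.cons_val_one]
  field_simp
  ring

theorem M_eq_rename :
    M t = rename Fin.succ (X 0 ^ 3) * X 0 - rename Fin.succ (C (2*t) * X 0 ^ 2 + 8) := by
  simp only [M, map_ofNat, map_add, map_mul, map_pow, rename_X, rename_C, Fin.succ_zero_eq_one]
  ring

theorem isCoprime_X_one_M : IsCoprime (X 1) (M t) := by
  refine ⟨C (1/8) * (X 1 ^ 2 * X 0 - C (2*t) * X 1), -C (1/8), ?_⟩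
  have h8 : (C (1/8 : ℂ) * 8 : MvPolynomial (Fin 2) ℂ) = 1 := by
    rw [← map_ofNat C 8, ← C_mul]; norm_num
  unfold M
  linear_combination h8

theorem not_X_zero_dvd_M : ¬ X 0 ∣ M t := by
  rintro ⟨q, hq⟩
  have h := congrArg (eval 0) hq
  simp only [M, map_sub, map_mul, map_pow, eval_X, eval_C, map_ofNat] at h
  norm_num at h

variable {t}

theorem IsInvariant.M_dvd {F : MvPolynomial (Fin 2) ℂ} (hF : IsInvariant t F)
    (hzero : ∀ ξ : ℂ, eval ![0, ξ] F = 0) : M t ∣ F := by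
  rw [M_eq_rename]
  refine dvd_of_eval_div_eq_zero (pow_ne_zero _ (X_ne_zero 0)) ?_ fun x hx => ?_
  · rw [← M_eq_rename, map_pow, rename_X, Fin.succ_zero_eq_one]
    exact (isCoprime_X_one_M t).pow_left
  · obtain ⟨ξ, rfl⟩ := Matrix.exists_eq_vecCons_of_fin_one x
    have hξ : ξ ≠ 0 := by simpa using hx
    have hc : eval ![ξ] (C (2*t) * X 0 ^ 2 + 8) / eval ![ξ] (X 0 ^ 3) = 8/ξ^3 + 2*t/ξ := by
      simp only [map_add, map_mul, map_pow, eval_C, eval_X, Matrix.cons_val_fin_one, eval_ofNat]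
      field_simp
      ring
    rw [hc]
    simpa [hzero] using hF 0 ξ hξ

theorem IsInvariant.of_E_mul {Q : MvPolynomial (Fin 2) ℂ} (hQ : IsInvariant t (E t * Q)) :
    IsInvariant t Q := by
  intro z ξ hξ
  set c := 8/ξ^3 + 2*t/ξ
  have hoff : Set.EqOn (fun w => eval ![c - w, ξ] Q) (fun w => eval ![w, ξ] Q) {0, c}ᶜ := by
    intro w hw
    simp only [Set.mem_compl_iff, Set.mem_insert_iff, Set.mem_singleton_iff, not_or] at hw
    have hevalE : ∀ u, eval ![u, ξ] (E t * Q) = u * eval ![u, ξ] (M t) * eval ![u, ξ] Q :=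
      fun u => by simp only [E, map_mul, eval_X, Matrix.cons_val_zero]
    have hE : w * eval ![w, ξ] (M t) ≠ 0 := by
      rw [eval_M_eq_of_ne_zero t hξ]
      exact mul_ne_zero hw.1 (mul_ne_zero (pow_ne_zero 3 hξ) (sub_ne_zero.2 hw.2))
    have hEτ : (c - w) * eval ![c - w, ξ] (M t) = w * eval ![w, ξ] (M t) := by
      rw [eval_M_eq_of_ne_zero t hξ, eval_M_eq_of_ne_zero t hξ]
      ring
    refine mul_left_cancel₀ hE ?_
    dsimp only
    rw [← hevalE w, ← hEτ, ← hevalE]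
    exact hQ w ξ hξ
  have hdense : Dense ({0, c} : Set ℂ)ᶜ := (Set.toFinite _).countable.dense_compl ℂ
  exact congrFun (Continuous.ext_on hdense ((continuous_eval Q).comp (by fun_prop))
    ((continuous_eval Q).comp (by fun_prop)) hoff) z

end TauInvolution

open TauInvolution

theorem tau_invariant_divisible_by_E (t : ℂ) (F : MvPolynomial (Fin 2) ℂ)
    (hinv : ∀ z ξ : ℂ, ξ ≠ 0 →
      eval ![8/ξ^3 + 2*t/ξ - z, ξ] F = eval ![z, ξ] F)
    (hzero : ∀ ξ : ℂ, eval ![0, ξ] F = 0) :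
    ∃ Q : MvPolynomial (Fin 2) ℂ,
      F = (X 0 * ((X 1)^3 * X 0 - C (2*t) * (X 1)^2 - 8)) * Q ∧
      ∀ z ξ : ℂ, ξ ≠ 0 →
        eval ![8/ξ^3 + 2*t/ξ - z, ξ] Q = eval ![z, ξ] Q := by
  have hX0 : X 0 ∣ F := X_zero_dvd_of_eval_zero fun x => by
    obtain ⟨ξ, rfl⟩ := Matrix.exists_eq_vecCons_of_fin_one x
    exact hzero ξ
  obtain ⟨H, rfl⟩ := IsInvariant.M_dvd hinv hzero
  obtain ⟨Q, rfl⟩ := (X_prime.dvd_or_dvd hX0).resolve_left (not_X_zero_dvd_M t)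
  have hE : M t * (X 0 * Q) = E t * Q := by rw [E]; ring
  rw [hE] at hinv ⊢
  exact ⟨Q, rfl, IsInvariant.of_E_mul hinv⟩
end

section
/- Fix t ∈ ℂ. Let F ∈ ℂ[z,ξ] satisfy F(8ξ⁻³ + 2tξ⁻¹ − z, ξ) = F(z,ξ) for all z ∈ ℂ and all ξ ≠ 0. Then there exist an integer M ≥ 0 and polynomials f₀, …, f_M ∈ ℂ[ξ] such that F(z,ξ) = Σ_{m=0}^{M} f_m(ξ) E(z,ξ)^m, where E(z,ξ) = z(ξ³z − 2tξ² − 8); that is, F lies in the ℂ[ξ]-subalgebra of ℂ[z,ξ] generated by E. -/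
open MvPolynomial

set_option synthInstance.maxHeartbeats 1000000
set_option maxHeartbeats 1000000

noncomputable section TauAux

/-- `ξ³` as element of `ℂ[ξ]`. -/
def xi3 : Polynomial ℂ := Polynomial.X ^ 3

/-- `2tξ² + 8` as element of `ℂ[ξ]`. -/
def Pt (t : ℂ) : Polynomial ℂ := Polynomial.C (2*t) * Polynomial.X ^ 2 + Polynomial.C 8

/-- `E = ξ³z² - (2tξ²+8)z` as element of `ℂ[ξ][z]`. -/
def Ez (t : ℂ) : Polynomial (Polynomial ℂ) :=
  Polynomial.C xi3 * Polynomial.X ^ 2 - Polynomial.C (Pt t) * Polynomial.X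

/-- `ℂ[z,ξ] → ℂ[ξ][z]`. -/
def toPoly : MvPolynomial (Fin 2) ℂ →ₐ[ℂ] Polynomial (Polynomial ℂ) :=
  MvPolynomial.aeval ![Polynomial.X, Polynomial.C Polynomial.X]

abbrev KK : Type := FractionRing (Polynomial ℂ)
def φK : Polynomial ℂ →+* KK := algebraMap (Polynomial ℂ) KK

lemma ev_toPoly (z ξ : ℂ) (F : MvPolynomial (Fin 2) ℂ) :
    Polynomial.eval₂ (Polynomial.evalRingHom ξ) z (toPoly F) = eval ![z, ξ] F := by
  induction F using MvPolynomial.induction_on with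
  | C a => simp [toPoly]
  | add p q hp hq => simp [map_add, hp, hq]
  | mul_X p n hp =>
      rw [map_mul, Polynomial.eval₂_mul, hp, map_mul]
      congr 1
      fin_cases n <;> simp [toPoly]

lemma ev_Ez (t z ξ : ℂ) :
    Polynomial.eval₂ (Polynomial.evalRingHom ξ) z (Ez t) = z * (ξ^3 * z - 2*t*ξ^2 - 8) := by
  simp [Ez, xi3, Pt, Polynomial.eval₂_pow]
  ring

lemma step_B (t : ℂ) (F : MvPolynomial (Fin 2) ℂ)
    (hinv : ∀ z ξ : ℂ, ξ ≠ 0 → eval ![8/ξ^3 + 2*t/ξ - z, ξ] F = eval ![z, ξ] F) :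
    ((toPoly F).sum fun k a => Polynomial.C a *
        (Polynomial.C (Pt t) - Polynomial.C xi3 * Polynomial.X) ^ k *
        Polynomial.C xi3 ^ ((toPoly F).natDegree - k))
      = Polynomial.C (xi3 ^ (toPoly F).natDegree) * toPoly F := by
  set N := (toPoly F).natDegree with hN
  have key : ∀ z ξ : ℂ, ξ ≠ 0 →
      Polynomial.eval₂ (Polynomial.evalRingHom ξ) z
        ((toPoly F).sum fun k a => Polynomial.C a *
          (Polynomial.C (Pt t) - Polynomial.C xi3 * Polynomial.X) ^ k *
          Polynomial.C xi3 ^ (N - k))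
      = Polynomial.eval₂ (Polynomial.evalRingHom ξ) z
          (Polynomial.C (xi3 ^ N) * toPoly F) := by
    intro z ξ hξ
    rw [Polynomial.eval₂_mul, Polynomial.eval₂_C]
    have hrhs : Polynomial.eval₂ (Polynomial.evalRingHom ξ) z (toPoly F)
        = Polynomial.eval₂ (Polynomial.evalRingHom ξ) (8/ξ^3 + 2*t/ξ - z) (toPoly F) := by
      rw [ev_toPoly, ev_toPoly, hinv z ξ hξ]
    rw [hrhs]
    conv_rhs => rw [Polynomial.eval₂_eq_sum, Polynomial.sum_def, Finset.mul_sum]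
    conv_lhs => rw [Polynomial.sum_def, Polynomial.eval₂_finset_sum]
    refine Finset.sum_congr rfl fun k hk => ?_
    have hkN : k ≤ N := Polynomial.le_natDegree_of_mem_supp k hk
    rw [Polynomial.eval₂_mul, Polynomial.eval₂_mul, Polynomial.eval₂_pow, Polynomial.eval₂_pow,
      Polynomial.eval₂_sub, Polynomial.eval₂_mul]
    simp only [Polynomial.eval₂_C, Polynomial.eval₂_X]
    have hP : (Polynomial.evalRingHom ξ) (Pt t) = 2*t*ξ^2 + 8 := by
      simp [Pt]
    have hx : (Polynomial.evalRingHom ξ) xi3 = ξ^3 := by simp [xi3]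
    rw [hP, hx]
    have hsub : 2*t*ξ^2 + 8 - ξ^3 * z = ξ^3 * (8/ξ^3 + 2*t/ξ - z) := by
      field_simp; ring
    rw [hsub, mul_pow]
    have hpows : (ξ^3)^k * (ξ^3)^(N-k) = (ξ^3)^N := by
      rw [← pow_add, Nat.add_sub_cancel' hkN]
    have hx2 : (Polynomial.evalRingHom ξ) (xi3 ^ N) = (ξ^3)^N := by simp [xi3, ← pow_mul]
    rw [hx2]
    calc (Polynomial.evalRingHom ξ) ((toPoly F).coeff k) * ((ξ^3)^k * (8/ξ^3 + 2*t/ξ - z)^k) * (ξ^3)^(N-k)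
        = (Polynomial.evalRingHom ξ) ((toPoly F).coeff k) * (8/ξ^3 + 2*t/ξ - z)^k * ((ξ^3)^k * (ξ^3)^(N-k)) := by ring
      _ = _ := by rw [hpows]; ring
  -- go from pointwise to identity
  apply Polynomial.ext
  intro n
  apply Polynomial.eq_of_infinite_eval_eq
  apply Set.Infinite.mono (s := {x : ℂ | x ≠ 0})
  swap
  · exact (Set.finite_singleton 0).infinite_compl
  intro ξ hξ
  simp only [Set.mem_setOf_eq]
  have hmap : ∀ p : Polynomial (Polynomial ℂ),
      Polynomial.eval ξ (p.coeff n) = (Polynomial.map (Polynomial.evalRingHom ξ) p).coeff n := by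
    intro p; rw [Polynomial.coeff_map]; rfl
  rw [hmap, hmap]
  congr 1
  apply Polynomial.funext
  intro z
  rw [Polynomial.eval_map, Polynomial.eval_map]
  exact key z ξ hξ

lemma xi3_ne : φK xi3 ≠ 0 := by
  have h1 : xi3 ≠ 0 := by
    simp [xi3, pow_ne_zero, Polynomial.X_ne_zero]
  intro h
  exact h1 ((map_eq_zero_iff φK (IsFractionRing.injective _ _)).mp h)

lemma step_sigma (t : ℂ) (F : MvPolynomial (Fin 2) ℂ)
    (hinv : ∀ z ξ : ℂ, ξ ≠ 0 → eval ![8/ξ^3 + 2*t/ξ - z, ξ] F = eval ![z, ξ] F) :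
    (Polynomial.map φK (toPoly F)).comp
        (Polynomial.C (φK (Pt t) / φK xi3) - Polynomial.X)
      = Polynomial.map φK (toPoly F) := by
  set N := (toPoly F).natDegree with hN
  set c : KK := φK (Pt t) / φK xi3 with hc
  set q : Polynomial KK := Polynomial.C c - Polynomial.X with hq
  have hcx : φK xi3 * c = φK (Pt t) := by
    rw [hc, mul_div_cancel₀ _ xi3_ne]
  apply mul_left_cancel₀ (a := (Polynomial.C (φK xi3)) ^ N)
  · exact pow_ne_zero _ (by simpa using xi3_ne)
  have hmapB := congrArg (Polynomial.map φK) (step_B t F hinv)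
  rw [Polynomial.map_mul, Polynomial.map_C, map_pow] at hmapB
  rw [Polynomial.C_pow] at hmapB
  rw [← hmapB]
  -- compute comp as a sum
  rw [show (Polynomial.map φK (toPoly F)).comp q
      = Polynomial.eval₂ ((Polynomial.C : KK →+* Polynomial KK).comp φK) q (toPoly F) by
    rw [Polynomial.comp, Polynomial.eval₂_map]]
  rw [Polynomial.eval₂_eq_sum, Polynomial.sum_def, Finset.mul_sum]
  -- compute map of the B-sum
  rw [show Polynomial.map φK ((toPoly F).sum fun k a => Polynomial.C a *
        (Polynomial.C (Pt t) - Polynomial.C xi3 * Polynomial.X) ^ k *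
        Polynomial.C xi3 ^ (N - k))
      = ∑ k ∈ (toPoly F).support, Polynomial.C (φK ((toPoly F).coeff k)) *
          (Polynomial.C (φK (Pt t)) - Polynomial.C (φK xi3) * Polynomial.X) ^ k *
          Polynomial.C (φK xi3) ^ (N - k) by
    rw [Polynomial.sum_def, Polynomial.map_sum]
    refine Finset.sum_congr rfl fun k hk => ?_
    simp [Polynomial.map_mul, Polynomial.map_pow, Polynomial.map_sub, Polynomial.map_C]]
  refine Finset.sum_congr rfl fun k hk => ?_
  have hkN : k ≤ N := Polynomial.le_natDegree_of_mem_supp k hk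
  have hfac : Polynomial.C (φK (Pt t)) - Polynomial.C (φK xi3) * Polynomial.X
      = Polynomial.C (φK xi3) * q := by
    rw [hq, mul_sub, ← Polynomial.C_mul, hcx]
  rw [hfac, mul_pow]
  simp only [RingHom.comp_apply]
  rw [show Polynomial.C (φK ((toPoly F).coeff k)) * (Polynomial.C (φK xi3) ^ k * q ^ k) *
        Polynomial.C (φK xi3) ^ (N - k)
      = Polynomial.C (φK xi3) ^ k * Polynomial.C (φK xi3) ^ (N - k) *
        (Polynomial.C (φK ((toPoly F).coeff k)) * q ^ k) by ring]
  rw [← pow_add, Nat.add_sub_cancel' hkN]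

lemma Ek_inv (u P c : KK) (hcx : u * c = P) :
    (Polynomial.C u * Polynomial.X ^ 2 - Polynomial.C P * Polynomial.X).comp
      (Polynomial.C c - Polynomial.X)
    = Polynomial.C u * Polynomial.X ^ 2 - Polynomial.C P * Polynomial.X := by
  rw [← hcx]
  simp only [Polynomial.sub_comp, Polynomial.mul_comp, Polynomial.C_comp, Polynomial.pow_comp,
    Polynomial.X_comp, Polynomial.C_mul]
  ring

lemma rep_of_inv (u P c : KK) (hu : u ≠ 0) (hcx : u * c = P) :
    ∀ (n : ℕ) (G : Polynomial KK), G.natDegree ≤ n →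
      G.comp (Polynomial.C c - Polynomial.X) = G →
      ∃ (M : ℕ) (g : ℕ → KK), G = ∑ m ∈ Finset.range (M + 1),
        Polynomial.C (g m) * (Polynomial.C u * Polynomial.X ^ 2 - Polynomial.C P * Polynomial.X) ^ m := by
  intro n
  induction n using Nat.strong_induction_on with
  | _ n IH =>
  intro G hGn hGinv
  set Ek : Polynomial KK := Polynomial.C u * Polynomial.X ^ 2 - Polynomial.C P * Polynomial.X with hEk
  have hEklc : ∀ j : ℕ, (Ek ^ j).coeff (2 * j) = u ^ j := by
    intro j
    have h2 : Ek.natDegree = 2 := by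
      have : Ek = Polynomial.C u * Polynomial.X ^ 2 + Polynomial.C (-P) * Polynomial.X
          + Polynomial.C 0 := by rw [hEk]; simp; ring
      rw [this, Polynomial.natDegree_quadratic hu]
    have hlc : Ek.leadingCoeff = u := by
      rw [Polynomial.leadingCoeff, h2, hEk]
      simp [Polynomial.coeff_sub, Polynomial.coeff_C_mul, Polynomial.coeff_X_pow,
        Polynomial.coeff_X]
    have hdeg : (Ek ^ j).natDegree = 2 * j := by
      rw [Polynomial.natDegree_pow, h2, Nat.mul_comm]
    rw [← hdeg, ← Polynomial.leadingCoeff, Polynomial.leadingCoeff_pow, hlc]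
  by_cases hG0 : G.natDegree = 0
  · refine ⟨0, fun _ => G.coeff 0, ?_⟩
    rw [Polynomial.eq_C_of_natDegree_eq_zero hG0]
    simp
  · -- positive degree
    have hGne : G ≠ 0 := fun h => hG0 (by simp [h])
    set d := G.natDegree with hd
    -- degree is even
    have hq1 : (Polynomial.C c - Polynomial.X : Polynomial KK).natDegree = 1 := by
      rw [show Polynomial.C c - Polynomial.X = -(Polynomial.X - Polynomial.C c) by ring,
        Polynomial.natDegree_neg, Polynomial.natDegree_X_sub_C]
    have hqlc : (Polynomial.C c - Polynomial.X : Polynomial KK).leadingCoeff = -1 := by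
      rw [show Polynomial.C c - Polynomial.X = -(Polynomial.X - Polynomial.C c) by ring,
        Polynomial.leadingCoeff_neg, Polynomial.leadingCoeff, Polynomial.natDegree_X_sub_C]
      simp
    have hlcomp := Polynomial.leadingCoeff_comp (p := G) (q := Polynomial.C c - Polynomial.X)
      (by rw [hq1]; exact one_ne_zero)
    rw [hGinv, hqlc] at hlcomp
    have hpar : (-1 : KK) ^ d = 1 := by
      refine mul_left_cancel₀ (Polynomial.leadingCoeff_ne_zero.mpr hGne) ?_
      rw [mul_one]; exact hlcomp.symm
    have hdeven : 2 * (d / 2) = d := by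
      rcases Nat.even_or_odd d with he | ho
      · obtain ⟨k, hk⟩ := he; omega
      · exfalso
        rw [ho.neg_one_pow] at hpar
        have : (2 : KK) = 0 := by linear_combination -hpar
        simp at this
    set M := d / 2 with hM
    set a := G.leadingCoeff / u ^ M with ha
    set G' := G - Polynomial.C a * Ek ^ M with hG'
    have hGdeg' : G'.natDegree ≤ d := by
      refine le_trans (Polynomial.natDegree_sub_le _ _) ?_
      simp only [sup_le_iff]
      constructor
      · exact le_refl _
      · refine le_trans (Polynomial.natDegree_C_mul_le _ _) ?_
        rw [Polynomial.natDegree_pow]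
        have hE2 : Ek.natDegree ≤ 2 := by
          refine le_trans (Polynomial.natDegree_sub_le _ _) ?_
          simp only [sup_le_iff]
          constructor
          · exact le_trans (Polynomial.natDegree_C_mul_le _ _) (by simp)
          · exact le_trans (Polynomial.natDegree_C_mul_le _ _) (by simp)
        calc M * Ek.natDegree ≤ M * 2 := Nat.mul_le_mul_left M hE2
          _ ≤ d := by omega
    have hcoeffd : G'.coeff d = 0 := by
      rw [hG', Polynomial.coeff_sub, Polynomial.coeff_C_mul]
      rw [show d = 2 * M by omega, hEklc M]
      rw [ha, div_mul_cancel₀ _ (pow_ne_zero _ hu)]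
      rw [show 2 * M = d by omega, ← Polynomial.leadingCoeff, sub_self]
    have hG'inv : G'.comp (Polynomial.C c - Polynomial.X) = G' := by
      rw [hG', Polynomial.sub_comp, Polynomial.mul_comp, Polynomial.C_comp, Polynomial.pow_comp,
        hGinv, Ek_inv u P c hcx]
    by_cases hG'0 : G' = 0
    · refine ⟨M, fun m => if m = M then a else 0, ?_⟩
      rw [Finset.sum_eq_single M]
      · simp only [if_pos rfl]
        have : G = Polynomial.C a * Ek ^ M := by
          rw [← sub_eq_zero, ← hG']; exact hG'0
        exact this
      · intro b _ hb; simp [hb]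
      · intro h; exact absurd (Finset.self_mem_range_succ M) h
    · have hG'lt : G'.natDegree < d := by
        rcases lt_or_eq_of_le hGdeg' with h | h
        · exact h
        · exfalso
          apply hG'0
          have := Polynomial.leadingCoeff_ne_zero.mpr hG'0
          rw [Polynomial.leadingCoeff, h] at this
          exact absurd hcoeffd this
      have hdn : G'.natDegree < n := lt_of_lt_of_le hG'lt (le_trans (le_refl _) hGn)
      obtain ⟨M', g', hg'⟩ := IH G'.natDegree hdn G' (le_refl _) hG'inv
      -- combine
      set Mt := max M' M with hMt
      refine ⟨Mt, fun m => (if m ≤ M' then g' m else 0) + (if m = M then a else 0), ?_⟩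
      have hsplit : ∀ m ∈ Finset.range (Mt + 1),
          Polynomial.C ((if m ≤ M' then g' m else 0) + (if m = M then a else 0)) * Ek ^ m
          = Polynomial.C (if m ≤ M' then g' m else 0) * Ek ^ m
            + Polynomial.C (if m = M then a else 0) * Ek ^ m := by
        intro m _; rw [Polynomial.C_add, add_mul]
      rw [Finset.sum_congr rfl hsplit, Finset.sum_add_distrib]
      have h1 : ∑ m ∈ Finset.range (Mt + 1),
          Polynomial.C (if m ≤ M' then g' m else 0) * Ek ^ m = G' := by
        rw [hg']
        rw [← Finset.sum_subset (Finset.range_subset_range.mpr (by omega : M' + 1 ≤ Mt + 1))]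
        · refine Finset.sum_congr rfl fun m hm => ?_
          rw [if_pos (by simp at hm; omega)]
        · intro x _ hx
          rw [if_neg (by simp at hx; omega)]
          simp
      have h2 : ∑ m ∈ Finset.range (Mt + 1),
          Polynomial.C (if m = M then a else 0) * Ek ^ m = Polynomial.C a * Ek ^ M := by
        rw [Finset.sum_eq_single M]
        · simp
        · intro b _ hb; simp [hb]
        · intro h; exact absurd (Finset.mem_range.mpr (by omega)) h
      rw [h1, h2, hG']
      ring

lemma lin_indep (M : ℕ) (b : ℕ → ℂ) (Eα : Polynomial ℂ) (hE : 0 < Eα.natDegree)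
    (h : ∑ m ∈ Finset.range (M + 1), Polynomial.C (b m) * Eα ^ m = 0) :
    ∀ m ∈ Finset.range (M + 1), b m = 0 := by
  set p : Polynomial ℂ := ∑ m ∈ Finset.range (M + 1), Polynomial.C (b m) * Polynomial.X ^ m
    with hp
  have hcomp : p.comp Eα = 0 := by
    rw [hp, Polynomial.sum_comp]
    simp only [Polynomial.mul_comp, Polynomial.C_comp, Polynomial.pow_comp, Polynomial.X_comp]
    exact h
  have hp0 : p = 0 := by
    rcases Polynomial.comp_eq_zero_iff.mp hcomp with h0 | ⟨_, hE'⟩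
    · exact h0
    · exfalso
      rw [hE'] at hE
      simp at hE
  intro m hm
  have : p.coeff m = b m := by
    rw [hp, Polynomial.finset_sum_coeff]
    simp only [Polynomial.coeff_C_mul, Polynomial.coeff_X_pow]
    rw [Finset.sum_eq_single m]
    · simp
    · intro j _ hj
      rw [if_neg (fun h => hj h.symm)]
      simp
    · intro hc; exact absurd hm hc
  rw [← this, hp0]
  simp

lemma Emap (t α : ℂ) : Polynomial.map (Polynomial.evalRingHom α) (Ez t)
    = Polynomial.C (α^3) * Polynomial.X ^ 2 - Polynomial.C (2*t*α^2 + 8) * Polynomial.X := by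
  simp [Ez, xi3, Pt, Polynomial.map_sub, Polynomial.map_mul]

lemma Emap_deg (t α : ℂ) :
    0 < (Polynomial.C (α^3) * Polynomial.X ^ 2 -
      Polynomial.C (2*t*α^2 + 8) * Polynomial.X : Polynomial ℂ).natDegree := by
  by_cases hα : α = 0
  · apply lt_of_lt_of_le (by norm_num : (0:ℕ) < 1)
    apply Polynomial.le_natDegree_of_ne_zero
    simp only [Polynomial.coeff_sub, Polynomial.coeff_C_mul, Polynomial.coeff_X_pow,
      Polynomial.coeff_X, hα]
    norm_num
  · apply lt_of_lt_of_le (by norm_num : (0:ℕ) < 2)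
    apply Polynomial.le_natDegree_of_ne_zero
    simp only [Polynomial.coeff_sub, Polynomial.coeff_C_mul, Polynomial.coeff_X_pow,
      Polynomial.coeff_X]
    norm_num [pow_eq_zero_iff, hα]

lemma cancel_const (t : ℂ) (M : ℕ) (a : ℂ) (ha : a ≠ 0)
    (G : ℕ → Polynomial ℂ) (H : Polynomial (Polynomial ℂ))
    (hid : Polynomial.C (Polynomial.C a) * H
      = ∑ m ∈ Finset.range (M + 1), Polynomial.C (G m) * (Ez t) ^ m) :
    ∃ f : ℕ → Polynomial ℂ,
      H = ∑ m ∈ Finset.range (M + 1), Polynomial.C (f m) * (Ez t) ^ m := by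
  refine ⟨fun m => Polynomial.C a⁻¹ * G m, ?_⟩
  have key : Polynomial.C (Polynomial.C a⁻¹) * (Polynomial.C (Polynomial.C a) * H) = H := by
    rw [← mul_assoc, ← Polynomial.C_mul, ← Polynomial.C_mul, inv_mul_cancel₀ ha]
    simp
  rw [← key, hid, Finset.mul_sum]
  refine Finset.sum_congr rfl fun m _ => ?_
  rw [← mul_assoc, ← Polynomial.C_mul]

lemma cancel_denoms (t : ℂ) (M : ℕ) :
    ∀ (n : ℕ) (q : Polynomial ℂ), q ≠ 0 → q.natDegree ≤ n →
    ∀ (G : ℕ → Polynomial ℂ) (H : Polynomial (Polynomial ℂ)),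
      Polynomial.C q * H = ∑ m ∈ Finset.range (M + 1), Polynomial.C (G m) * (Ez t) ^ m →
    ∃ f : ℕ → Polynomial ℂ,
      H = ∑ m ∈ Finset.range (M + 1), Polynomial.C (f m) * (Ez t) ^ m := by
  intro n
  induction n with
  | zero =>
      intro q hq hqn G H hid
      have hq0 : q.natDegree = 0 := Nat.le_zero.mp hqn
      obtain ⟨a, haq⟩ := Polynomial.natDegree_eq_zero.mp hq0
      have ha : a ≠ 0 := by rintro rfl; rw [← haq] at hq; simp at hq
      rw [← haq] at hid
      exact cancel_const t M a ha G H hid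
  | succ n IH =>
      intro q hq hqn G H hid
      by_cases hq0 : q.natDegree = 0
      · obtain ⟨a, haq⟩ := Polynomial.natDegree_eq_zero.mp hq0
        have ha : a ≠ 0 := by rintro rfl; rw [← haq] at hq; simp at hq
        rw [← haq] at hid
        exact cancel_const t M a ha G H hid
      · -- q has a root α
        have hdegpos : 0 < q.degree :=
          Polynomial.natDegree_pos_iff_degree_pos.mp (Nat.pos_of_ne_zero hq0)
        obtain ⟨α, hα⟩ := Complex.exists_root hdegpos
        set q₁ := q /ₘ (Polynomial.X - Polynomial.C α) with hq₁
        have hqfac : (Polynomial.X - Polynomial.C α) * q₁ = q :=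
          Polynomial.mul_divByMonic_eq_iff_isRoot.mpr hα
        -- evaluate the identity at ξ = α
        have hev := congrArg (Polynomial.map (Polynomial.evalRingHom α)) hid
        rw [Polynomial.map_mul, Polynomial.map_C, Polynomial.map_sum] at hev
        simp only [Polynomial.map_mul, Polynomial.map_C, Polynomial.map_pow, Emap] at hev
        rw [show (Polynomial.evalRingHom α) q = 0 from hα, Polynomial.C_0, zero_mul] at hev
        have hGroot : ∀ m ∈ Finset.range (M + 1), (G m).eval α = 0 := by
          have := lin_indep M (fun m => (G m).eval α) _ (Emap_deg t α) hev.symm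
          exact this
        -- divide out
        have hGfac : ∀ m ∈ Finset.range (M + 1),
            (Polynomial.X - Polynomial.C α) * (G m /ₘ (Polynomial.X - Polynomial.C α)) = G m :=
          fun m hm => Polynomial.mul_divByMonic_eq_iff_isRoot.mpr (hGroot m hm)
        have hXne : (Polynomial.X - Polynomial.C α : Polynomial ℂ) ≠ 0 :=
          Polynomial.X_sub_C_ne_zero α
        have hq₁ne : q₁ ≠ 0 := by
          intro h
          apply hq
          rw [← hqfac, h, mul_zero]
        have hid₁ : Polynomial.C q₁ * H
            = ∑ m ∈ Finset.range (M + 1),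
                Polynomial.C (G m /ₘ (Polynomial.X - Polynomial.C α)) * (Ez t) ^ m := by
          apply mul_left_cancel₀ (a := (Polynomial.C (Polynomial.X - Polynomial.C α)
              : Polynomial (Polynomial ℂ)))
            (Polynomial.C_ne_zero.mpr hXne)
          rw [← mul_assoc, ← Polynomial.C_mul, hqfac, hid, Finset.mul_sum]
          refine Finset.sum_congr rfl fun m hm => ?_
          rw [← mul_assoc, ← Polynomial.C_mul, hGfac m hm]
        refine IH q₁ hq₁ne ?_ _ H hid₁
        have : q.natDegree = 1 + q₁.natDegree := by
          rw [← hqfac, Polynomial.natDegree_mul hXne hq₁ne, Polynomial.natDegree_X_sub_C]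
        omega

end TauAux

theorem tau_invariant_normal_form (t : ℂ) (F : MvPolynomial (Fin 2) ℂ)
    (hinv : ∀ z ξ : ℂ, ξ ≠ 0 →
      eval ![8/ξ^3 + 2*t/ξ - z, ξ] F = eval ![z, ξ] F) :
    ∃ (M : ℕ) (f : ℕ → Polynomial ℂ),
      ∀ z ξ : ℂ, eval ![z, ξ] F =
        ∑ m ∈ Finset.range (M + 1),
          Polynomial.eval ξ (f m) * (z * (ξ^3 * z - 2*t*ξ^2 - 8))^m := by
  obtain ⟨M, f, hf⟩ : ∃ (M : ℕ) (f : ℕ → Polynomial ℂ),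
      toPoly F = ∑ m ∈ Finset.range (M + 1), Polynomial.C (f m) * (Ez t) ^ m := by
    set Fk := Polynomial.map φK (toPoly F) with hFk
    have hu : φK xi3 ≠ 0 := xi3_ne
    have hcx : φK xi3 * (φK (Pt t) / φK xi3) = φK (Pt t) := mul_div_cancel₀ _ hu
    have hσ := step_sigma t F hinv
    obtain ⟨M, g, hg⟩ := rep_of_inv (φK xi3) (φK (Pt t)) _ hu hcx Fk.natDegree Fk le_rfl hσ
    have hEm : Polynomial.map φK (Ez t)
        = Polynomial.C (φK xi3) * Polynomial.X ^ 2 - Polynomial.C (φK (Pt t)) * Polynomial.X := by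
      simp [Ez, Polynomial.map_sub, Polynomial.map_mul, Polynomial.map_pow, Polynomial.map_C]
    obtain ⟨b, hb⟩ := IsLocalization.exist_integer_multiples
      (nonZeroDivisors (Polynomial ℂ)) (Finset.range (M+1)) g
    have hGex : ∀ m ∈ Finset.range (M+1), ∃ r : Polynomial ℂ,
        φK r = (b : Polynomial ℂ) • g m := by
      intro m hm
      obtain ⟨r, hr⟩ := hb m hm
      exact ⟨r, hr⟩
    choose! G hGs using hGex
    have hmain : Polynomial.map φK (Polynomial.C (b : Polynomial ℂ) * toPoly F)
        = Polynomial.map φK (∑ m ∈ Finset.range (M+1), Polynomial.C (G m) * Ez t ^ m) := by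
      rw [Polynomial.map_mul, Polynomial.map_C, ← hFk, hg, Finset.mul_sum, Polynomial.map_sum]
      refine Finset.sum_congr rfl fun m hm => ?_
      rw [Polynomial.map_mul, Polynomial.map_C, Polynomial.map_pow, hEm, ← mul_assoc,
        ← Polynomial.C_mul, hGs m hm, Algebra.smul_def]
      rfl
    have hid := Polynomial.map_injective φK (IsFractionRing.injective _ _) hmain
    have hbne : (b : Polynomial ℂ) ≠ 0 := mem_nonZeroDivisors_iff_ne_zero.mp b.2
    exact ⟨M, cancel_denoms t M (b : Polynomial ℂ).natDegree (b : Polynomial ℂ) hbne le_rfl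
      G (toPoly F) hid⟩
  refine ⟨M, f, fun z ξ => ?_⟩
  rw [← ev_toPoly, hf]
  rw [show (Polynomial.eval₂ (Polynomial.evalRingHom ξ) z
      (∑ m ∈ Finset.range (M + 1), Polynomial.C (f m) * (Ez t) ^ m))
    = ((Polynomial.eval₂RingHom (Polynomial.evalRingHom ξ) z)
      (∑ m ∈ Finset.range (M + 1), Polynomial.C (f m) * (Ez t) ^ m)) from rfl]
  rw [map_sum]
  refine Finset.sum_congr rfl fun m _ => ?_
  rw [map_mul, map_pow]
  rw [show ((Polynomial.eval₂RingHom (Polynomial.evalRingHom ξ) z) (Ez t) : ℂ)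
    = Polynomial.eval₂ (Polynomial.evalRingHom ξ) z (Ez t) from rfl, ev_Ez]
  simp
end

section
/- Fix t ∈ ℂ. Let G ∈ ℂ[z,ξ] satisfy G(8ξ⁻³ + 2tξ⁻¹ − z, ξ) = −G(z,ξ) for all z ∈ ℂ and all ξ ≠ 0. Then G is divisible in ℂ[z,ξ] by Δ(z,ξ) = ξ³z − tξ² − 4, and the quotient G/Δ satisfies (G/Δ)(8ξ⁻³ + 2tξ⁻¹ − z, ξ) = (G/Δ)(z,ξ) for all z ∈ ℂ and all ξ ≠ 0. -/
open MvPolynomial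

noncomputable def e1 : MvPolynomial (Fin 1) ℂ ≃ₐ[ℂ] Polynomial ℂ :=
  (MvPolynomial.finSuccEquiv ℂ 0).trans (Polynomial.mapAlgEquiv (MvPolynomial.isEmptyAlgEquiv ℂ (Fin 0)))

noncomputable def e2 : MvPolynomial (Fin 2) ℂ ≃ₐ[ℂ] Polynomial (Polynomial ℂ) :=
  (MvPolynomial.finSuccEquiv ℂ 1).trans (Polynomial.mapAlgEquiv e1)

lemma e2_X0 : e2 (MvPolynomial.X 0) = Polynomial.X := by
  simp [e2, e1, MvPolynomial.finSuccEquiv_X_zero]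

lemma e1_X0 : e1 (MvPolynomial.X 0) = Polynomial.X := by
  have : (0 : Fin 1) = (0 : Fin (0+1)) := rfl
  simp [e1, MvPolynomial.finSuccEquiv_X_zero]

lemma e2_X1 : e2 (MvPolynomial.X 1) = Polynomial.C Polynomial.X := by
  have h : (MvPolynomial.X 1 : MvPolynomial (Fin 2) ℂ) = MvPolynomial.X (Fin.succ 0) := rfl
  rw [e2, h, AlgEquiv.trans_apply, MvPolynomial.finSuccEquiv_X_succ]
  rw [show ((Polynomial.mapAlgEquiv e1) (Polynomial.C (MvPolynomial.X 0)) : Polynomial (Polynomial ℂ)) = Polynomial.map (e1 : MvPolynomial (Fin 1) ℂ →+* Polynomial ℂ) (Polynomial.C (MvPolynomial.X 0)) from rfl]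
  rw [Polynomial.map_C, ← e1_X0]
  rfl

lemma e2_C (c : ℂ) : e2 (MvPolynomial.C c) = Polynomial.C (Polynomial.C c) := by
  have : (MvPolynomial.C c : MvPolynomial (Fin 2) ℂ) = algebraMap ℂ _ c := rfl
  rw [this, AlgEquiv.commutes]
  rfl

lemma e2_eval (p : MvPolynomial (Fin 2) ℂ) (z ξ : ℂ) :
    MvPolynomial.eval ![z, ξ] p = Polynomial.eval ξ (Polynomial.eval (Polynomial.C z) (e2 p)) := by
  induction p using MvPolynomial.induction_on with
  | C c => simp [e2_C]
  | add p q hp hq => simp [map_add, hp, hq]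
  | mul_X p i hp =>
    rw [map_mul, map_mul]
    fin_cases i <;> simp [e2_X0, e2_X1, hp]

noncomputable def Dp (t : ℂ) : Polynomial (Polynomial ℂ) :=
  Polynomial.C (Polynomial.X ^ 3) * Polynomial.X
    - Polynomial.C (Polynomial.C t * Polynomial.X ^ 2 + 4)

lemma cancelX (t : ℂ) (m : Polynomial (Polynomial ℂ))
    (h : Dp t ∣ Polynomial.C Polynomial.X * m) : Dp t ∣ m := by
  obtain ⟨q, hq⟩ := h
  have hCX : (Polynomial.C Polynomial.X : Polynomial (Polynomial ℂ)) ≠ 0 :=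
    Polynomial.C_ne_zero.mpr Polynomial.X_ne_zero
  have hφ : Polynomial.map (Polynomial.evalRingHom (0:ℂ)) q = 0 := by
    have h2 := congrArg (Polynomial.mapRingHom (Polynomial.evalRingHom (0:ℂ))) hq
    simp only [map_mul, map_sub, Dp, Polynomial.coe_mapRingHom, Polynomial.map_C,
      Polynomial.map_X, Polynomial.map_add] at h2
    norm_num at h2
    exact h2
  have hC : Polynomial.C Polynomial.X ∣ q := by
    rw [Polynomial.C_dvd_iff_dvd_coeff]
    intro i
    rw [Polynomial.X_dvd_iff, Polynomial.coeff_zero_eq_eval_zero]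
    have := congrArg (fun r => Polynomial.coeff r i) hφ
    simpa [Polynomial.coeff_map] using this
  obtain ⟨q', rfl⟩ := hC
  refine ⟨q', mul_left_cancel₀ hCX ?_⟩
  rw [hq]; ring

lemma cancelXpow (t : ℂ) (k : ℕ) (m : Polynomial (Polynomial ℂ))
    (h : Dp t ∣ Polynomial.C Polynomial.X ^ k * m) : Dp t ∣ m := by
  induction k with
  | zero => simpa using h
  | succ k ih =>
    apply ih
    apply cancelX
    rw [show Polynomial.C Polynomial.X * (Polynomial.C Polynomial.X ^ k * m)
      = Polynomial.C Polynomial.X ^ (k+1) * m by ring]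
    exact h

lemma pseudo (t : ℂ) (g : Polynomial (Polynomial ℂ)) (n : ℕ) (hn : g.natDegree < n + 1) :
    Dp t ∣ Polynomial.C (Polynomial.X ^ 3) ^ n * g
      - Polynomial.C (∑ i ∈ Finset.range (n+1),
          g.coeff i * (Polynomial.C t * Polynomial.X ^ 2 + 4) ^ i * (Polynomial.X ^ 3) ^ (n - i)) := by
  set u : Polynomial ℂ := Polynomial.C t * Polynomial.X ^ 2 + 4 with hu
  set v : Polynomial ℂ := Polynomial.X ^ 3 with hv
  set a : ℕ → Polynomial ℂ := g.coeff with ha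
  have hg : g = ∑ i ∈ Finset.range (n+1), Polynomial.monomial i (a i) :=
    Polynomial.as_sum_range' g (n+1) hn
  rw [hg, map_sum, Finset.mul_sum, ← Finset.sum_sub_distrib]
  apply Finset.dvd_sum
  intro i hi
  have hi' : i ≤ n := Nat.lt_succ_iff.mp (Finset.mem_range.mp hi)
  have hvn : (Polynomial.C v : Polynomial (Polynomial ℂ)) ^ n
      = Polynomial.C v ^ (n - i) * Polynomial.C v ^ i := by
    rw [← pow_add, Nat.sub_add_cancel hi']
  have key : Polynomial.C v ^ n * Polynomial.monomial i (a i)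
      - Polynomial.C (a i * u ^ i * v ^ (n - i))
      = Polynomial.C (a i) * Polynomial.C v ^ (n - i)
        * ((Polynomial.C v * Polynomial.X) ^ i - Polynomial.C u ^ i) := by
    simp only [hvn, Polynomial.C_mul, Polynomial.C_pow, ← Polynomial.C_mul_X_pow_eq_monomial]
    ring
  rw [key]
  exact Dvd.dvd.mul_left (sub_dvd_pow_sub_pow _ _ i) _

lemma e2_Delta (t : ℂ) :
    e2 ((X 1)^3 * X 0 - C t * (X 1)^2 - 4) = Dp t := by
  have h4 : (4 : Polynomial (Polynomial ℂ)) = Polynomial.C (Polynomial.C 4) := by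
    rw [map_ofNat, map_ofNat]
  have h4' : (4 : Polynomial ℂ) = Polynomial.C 4 := by rw [map_ofNat]
  have he24 : e2 4 = Polynomial.C (Polynomial.C 4) := by rw [map_ofNat]; exact h4
  simp only [map_sub, map_mul, map_pow, e2_X0, e2_X1, e2_C, Dp, h4', h4, he24,
    Polynomial.C_add, Polynomial.C_mul, Polynomial.C_pow]
  ring

theorem skew_invariant_divisible_by_Delta (t : ℂ) (G : MvPolynomial (Fin 2) ℂ)
    (hskew : ∀ z ξ : ℂ, ξ ≠ 0 →
      eval ![8/ξ^3 + 2*t/ξ - z, ξ] G = -eval ![z, ξ] G) :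
    ∃ Q : MvPolynomial (Fin 2) ℂ,
      G = ((X 1)^3 * X 0 - C t * (X 1)^2 - 4) * Q ∧
      ∀ z ξ : ℂ, ξ ≠ 0 →
        eval ![8/ξ^3 + 2*t/ξ - z, ξ] Q = eval ![z, ξ] Q := by
  set g : Polynomial (Polynomial ℂ) := e2 G with hgdef
  set n : ℕ := g.natDegree with hn
  -- Step 1 : G vanishes on the fixed locus
  have hroot : ∀ ξ : ℂ, ξ ≠ 0 → eval ![(t*ξ^2+4)/ξ^3, ξ] G = 0 := by
    intro ξ hξ
    have hfix : 8/ξ^3 + 2*t/ξ - (t*ξ^2+4)/ξ^3 = (t*ξ^2+4)/ξ^3 := by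
      field_simp; ring
    have h := hskew ((t*ξ^2+4)/ξ^3) ξ hξ
    rw [hfix] at h
    have h2 : eval ![(t*ξ^2+4)/ξ^3, ξ] G * 2 = 0 := by linear_combination h
    exact (mul_eq_zero.mp h2).resolve_right two_ne_zero
  -- Step 2 : the single-variable witness polynomial
  set Wp : Polynomial ℂ := ∑ i ∈ Finset.range (n+1),
      g.coeff i * (Polynomial.C t * Polynomial.X ^ 2 + 4) ^ i * (Polynomial.X ^ 3) ^ (n - i)
    with hWp
  have hWeval : ∀ ξ : ℂ, ξ ≠ 0 → Wp.eval ξ = 0 := by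
    intro ξ hξ
    set z₀ : ℂ := (t*ξ^2+4)/ξ^3 with hz₀
    have hGz : eval ![z₀, ξ] G = 0 := hroot ξ hξ
    have hsum : eval ![z₀, ξ] G
        = ∑ i ∈ Finset.range (n+1), (g.coeff i).eval ξ * z₀ ^ i := by
      rw [e2_eval G z₀ ξ, ← hgdef,
        Polynomial.eval_eq_sum_range' (n := n+1) (by rw [hn]; exact Nat.lt_succ_self _)
          (Polynomial.C z₀),
        Polynomial.eval_finset_sum]
      refine Finset.sum_congr rfl fun i _ => ?_
      simp [mul_comm]
    have hWξ : Wp.eval ξ = (ξ^3)^n * eval ![z₀, ξ] G := by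
      rw [hsum, Finset.mul_sum, hWp, Polynomial.eval_finset_sum]
      refine Finset.sum_congr rfl fun i hi => ?_
      have hi' : i ≤ n := Nat.lt_succ_iff.mp (Finset.mem_range.mp hi)
      have hpow : (ξ^3)^n = (ξ^3)^i * (ξ^3)^(n-i) := by
        rw [← pow_add, Nat.add_sub_cancel' hi']
      have hz : z₀ ^ i * (ξ^3)^i = (t*ξ^2+4)^i := by
        rw [hz₀, div_pow, div_mul_cancel₀]
        exact pow_ne_zero _ (pow_ne_zero _ hξ)
      simp only [Polynomial.eval_mul, Polynomial.eval_pow, Polynomial.eval_add,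
        Polynomial.eval_C, Polynomial.eval_X, Polynomial.eval_ofNat]
      rw [hpow, ← hz]
      ring
    rw [hWξ, hGz, mul_zero]
  have hW0 : Wp = 0 := by
    apply Polynomial.eq_zero_of_infinite_isRoot
    apply Set.Infinite.mono (s := {x : ℂ | x ≠ 0})
    · exact fun x hx => hWeval x hx
    · exact Set.Finite.infinite_compl (Set.finite_singleton 0)
  -- Step 3 : divisibility
  have hdvd : Dp t ∣ g := by
    have hps := pseudo t g n (Nat.lt_succ_self n)
    rw [← hWp, hW0, map_zero, sub_zero, Polynomial.C_pow, ← pow_mul] at hps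
    exact cancelXpow t (3*n) g hps
  obtain ⟨q, hq⟩ := hdvd
  have hGQ : G = ((X 1)^3 * X 0 - C t * (X 1)^2 - 4) * e2.symm q := by
    apply e2.injective
    rw [map_mul, e2_Delta, AlgEquiv.apply_symm_apply, ← hgdef, hq]
  refine ⟨e2.symm q, hGQ, ?_⟩
  -- Step 4 : invariance of the quotient
  intro z ξ hξ
  have hevalΔ : ∀ a b : ℂ, eval ![a, b] ((X 1)^3 * X 0 - C t * (X 1)^2 - 4)
      = b^3*a - t*b^2 - 4 := by
    intro a b
    simp
  have h := hskew z ξ hξ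
  rw [hGQ, map_mul, map_mul, hevalΔ, hevalΔ] at h
  have hs : ξ^3*(8/ξ^3 + 2*t/ξ - z) - t*ξ^2 - 4 = -(ξ^3*z - t*ξ^2 - 4) := by
    field_simp
    ring
  rw [hs] at h
  by_cases hD : ξ^3*z - t*ξ^2 - 4 = 0
  · have hz2 : z = (t*ξ^2+4)/ξ^3 := by
      rw [eq_div_iff (pow_ne_zero 3 hξ)]
      linear_combination hD
    have hfix : 8/ξ^3 + 2*t/ξ - (t*ξ^2+4)/ξ^3 = (t*ξ^2+4)/ξ^3 := by
      field_simp; ring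
    rw [hz2, hfix]
  · have h' : (ξ^3*z - t*ξ^2 - 4) * eval ![8/ξ^3 + 2*t/ξ - z, ξ] (e2.symm q)
        = (ξ^3*z - t*ξ^2 - 4) * eval ![z, ξ] (e2.symm q) := by
      linear_combination -h
    exact mul_left_cancel₀ hD h'
end

section
/- Fix t ∈ ℂ. Let G ∈ ℂ[z,ξ] satisfy G(8ξ⁻³ + 2tξ⁻¹ − z, ξ) = −G(z,ξ) for all z ∈ ℂ and all ξ ≠ 0. Then there exist an integer N ≥ 0 and polynomials g₀, …, g_N ∈ ℂ[ξ] such that G(z,ξ) = Δ(z,ξ) · Σ_{n=0}^{N} g_n(ξ) E(z,ξ)^n, where Δ(z,ξ) = ξ³z − tξ² − 4 and E(z,ξ) = z(ξ³z − 2tξ² − 8). -/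
noncomputable section
namespace SkewAux
open Polynomial

abbrev R := Polynomial ℂ
abbrev S := Polynomial R

def Dp (t : ℂ) : S := C (X^3) * X - C (C t * X^2 + 4)
def Ep (t : ℂ) : S := X * (C (X^3) * X - C (C (2*t) * X^2 + 8))

def evv (z ξ : ℂ) : S →+* ℂ := (evalRingHom z).comp (mapRingHom (evalRingHom ξ))

lemma evv_C (z ξ : ℂ) (r : R) : evv z ξ (C r) = r.eval ξ := by simp [evv]
lemma evv_X (z ξ : ℂ) : evv z ξ (X : S) = z := by simp [evv]

lemma evv_Dp (t z ξ : ℂ) : evv z ξ (Dp t) = ξ^3*z - t*ξ^2 - 4 := by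
  simp only [Dp, evv, RingHom.comp_apply, coe_mapRingHom, coe_evalRingHom,
    Polynomial.map_mul, Polynomial.map_sub, Polynomial.map_add, map_C, map_X,
    Polynomial.map_pow, Polynomial.map_ofNat, eval_mul, eval_sub, eval_add,
    eval_C, eval_X, eval_pow, eval_ofNat]
  ring

lemma evv_Ep (t z ξ : ℂ) : evv z ξ (Ep t) = z*(ξ^3*z - 2*t*ξ^2 - 8) := by
  simp only [Ep, evv, RingHom.comp_apply, coe_mapRingHom, coe_evalRingHom,
    Polynomial.map_mul, Polynomial.map_sub, Polynomial.map_add, map_C, map_X,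
    Polynomial.map_pow, Polynomial.map_ofNat, eval_mul, eval_sub, eval_add,
    eval_C, eval_X, eval_pow, eval_ofNat]
  ring

end SkewAux
namespace SkewAux
open Polynomial

lemma X3_ne : (X^3 : R) ≠ 0 := pow_ne_zero _ X_ne_zero

lemma natDegree_Dp (t : ℂ) : (Dp t).natDegree = 1 := by
  rw [Dp, natDegree_sub_C, natDegree_C_mul_X _ X3_ne]

lemma coeff_Dp_one (t : ℂ) : (Dp t).coeff 1 = X^3 := by
  simp only [Dp, coeff_sub, coeff_C_mul, coeff_X_one, coeff_C]
  norm_num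

lemma leadingCoeff_Dp (t : ℂ) : (Dp t).leadingCoeff = X^3 := by
  rw [leadingCoeff, natDegree_Dp, coeff_Dp_one]

lemma Dp_ne (t : ℂ) : Dp t ≠ 0 := by
  intro h
  have := leadingCoeff_Dp t
  rw [h] at this
  exact X3_ne (by simpa using this.symm)

lemma natDegree_Ep (t : ℂ) : (Ep t).natDegree = 2 := by
  rw [Ep]
  rw [natDegree_mul X_ne_zero ?h]
  · rw [natDegree_X, natDegree_sub_C, natDegree_C_mul_X _ X3_ne]
  · intro h
    have h1 : (C (X^3) * X - C (C (2*t) * X^2 + 8) : S).coeff 1 = X^3 := by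
      simp only [coeff_sub, coeff_C_mul, coeff_X_one, coeff_C]
      norm_num
    rw [h] at h1
    exact X3_ne (by simpa using h1.symm)

lemma leadingCoeff_Ep (t : ℂ) : (Ep t).leadingCoeff = X^3 := by
  have h2 : (Ep t).coeff 2 = X^3 := by
    have : (Ep t).coeff 2 = (C (X^3) * X - C (C (2*t) * X^2 + 8) : S).coeff 1 := by
      rw [Ep, coeff_X_mul]
    rw [this]
    simp only [coeff_sub, coeff_C_mul, coeff_X_one, coeff_C]
    norm_num
  rw [leadingCoeff, natDegree_Ep, h2]

lemma Ep_ne (t : ℂ) : Ep t ≠ 0 := by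
  intro h
  have := leadingCoeff_Ep t
  rw [h] at this
  exact X3_ne (by simpa using this.symm)

lemma natDegree_DE (t : ℂ) (N : ℕ) : (Dp t * Ep t ^ N).natDegree = 2*N + 1 := by
  rw [natDegree_mul (Dp_ne t) (pow_ne_zero _ (Ep_ne t)), natDegree_pow,
    natDegree_Dp, natDegree_Ep]
  ring

lemma leadingCoeff_DE (t : ℂ) (N : ℕ) :
    (Dp t * Ep t ^ N).leadingCoeff = X^(3*N+3) := by
  rw [leadingCoeff_mul, leadingCoeff_pow, leadingCoeff_Dp, leadingCoeff_Ep,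
    ← pow_mul, ← pow_add]
  ring_nf


lemma div_xi (t : ℂ) (P : S) (N : ℕ) (g : ℕ → R)
    (h : C X * P = Dp t * ∑ n ∈ Finset.range (N+1), C (g n) * Ep t ^ n) :
    ∃ g' : ℕ → R, P = Dp t * ∑ n ∈ Finset.range (N+1), C (g' n) * Ep t ^ n := by
  set g1 : ℕ → R := fun n => if n ≤ N then g n else 0 with hg1
  have hsum : ∑ n ∈ Finset.range (N+1), C (g n) * Ep t ^ n
      = ∑ n ∈ Finset.range (N+1), C (g1 n) * Ep t ^ n := by
    refine Finset.sum_congr rfl fun n hn => ?_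
    rw [hg1]; simp only []
    rw [if_pos (Nat.lt_succ_iff.mp (Finset.mem_range.mp hn))]
  rw [hsum] at h
  -- apply ξ ↦ 0
  set ε : S →+* Polynomial ℂ := mapRingHom (evalRingHom (0:ℂ)) with hε
  have hεC : ∀ r : R, ε (C r) = C (r.eval 0) := fun r => by simp [hε]
  have hεD : ε (Dp t) = C (-4) := by
    simp [hε, Dp]
  have hεE : ε (Ep t) = C (-8) * X := by
    simp [hε, Ep]
  have h0 : (0 : Polynomial ℂ)
      = ∑ n ∈ Finset.range (N+1), C (-4 * (g1 n).eval 0 * (-8)^n) * X^n := by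
    have := congrArg ε h
    rw [map_mul, map_mul, hεC, map_sum, hεD] at this
    simp only [map_mul, map_pow, hεC, hεE] at this
    rw [eval_X, map_zero, zero_mul] at this
    rw [this, Finset.mul_sum]
    refine Finset.sum_congr rfl fun n hn => ?_
    rw [mul_pow, ← C_pow, ← mul_assoc, ← mul_assoc, ← C_mul, ← C_mul]
  have hroot : ∀ n, (g1 n).eval 0 = 0 := by
    intro n
    by_cases hn : n ≤ N
    · have := congrArg (fun p => Polynomial.coeff p n) h0
      simp only [coeff_zero, finset_sum_coeff, coeff_C_mul, coeff_X_pow] at this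
      rw [Finset.sum_eq_single n (fun b _ hb => by rw [if_neg (Ne.symm hb), mul_zero])
        (fun hn' => absurd (Finset.mem_range.mpr (Nat.lt_succ_of_le hn)) hn')] at this
      rw [if_pos rfl, mul_one] at this
      have h8 : ((-8:ℂ))^n ≠ 0 := pow_ne_zero _ (by norm_num)
      have this2 := this.symm
      rcases mul_eq_zero.mp this2 with h' | h'
      · rcases mul_eq_zero.mp h' with h'' | h''
        · norm_num at h''
        · exact h''
      · exact absurd h' h8
    · rw [hg1]; simp [if_neg hn]
  have hdvd : ∀ n, (X : R) ∣ g1 n := by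
    intro n
    have := (dvd_iff_isRoot (p := g1 n) (a := 0)).mpr (hroot n)
    simpa using this
  choose h' hh' using hdvd
  refine ⟨h', ?_⟩
  have hXne : (C (X : R) : S) ≠ 0 := C_ne_zero.mpr X_ne_zero
  apply mul_left_cancel₀ hXne
  rw [h]
  rw [Finset.mul_sum, Finset.mul_sum, Finset.mul_sum]
  refine Finset.sum_congr rfl fun n hn => ?_
  rw [hh' n, C_mul]
  ring


def Skew (t : ℂ) (P : S) : Prop :=
  ∀ z ξ : ℂ, ξ ≠ 0 → evv (8/ξ^3 + 2*t/ξ - z) ξ P = - evv z ξ P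

lemma key (t : ℂ) : ∀ d (P : S), P.natDegree = d → Skew t P →
    ∃ (m N : ℕ) (g : ℕ → R), C (X^m) * P
      = Dp t * ∑ n ∈ Finset.range (N+1), C (g n) * Ep t ^ n := by
  intro d
  induction d using Nat.strong_induction_on with
  | _ d IH =>
  intro P hdeg hsk
  by_cases hP : P = 0
  · exact ⟨0, 0, 0, by simp [hP]⟩
  set a := P.leadingCoeff with ha
  have hane : a ≠ 0 := leadingCoeff_ne_zero.mpr hP
  obtain ⟨ξ0, hξ0ne, haξ0⟩ : ∃ ξ0 : ℂ, ξ0 ≠ 0 ∧ a.eval ξ0 ≠ 0 := by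
    by_contra hcon
    push_neg at hcon
    have hz : ∀ x : ℂ, (a * X).eval x = (0 : Polynomial ℂ).eval x := by
      intro x
      by_cases hx : x = 0
      · simp [hx]
      · simp [hcon x hx]
    have := Polynomial.funext hz
    exact (mul_ne_zero hane X_ne_zero) (by simpa using this)
  set c : ℂ := 8/ξ0^3 + 2*t/ξ0 with hc
  set p : Polynomial ℂ := P.map (evalRingHom ξ0) with hp
  have hpeval : ∀ z, p.eval z = evv z ξ0 P := fun z => rfl
  have hskp : ∀ z, p.eval (c - z) = - p.eval z := fun z => by
    rw [hpeval, hpeval]; exact hsk z ξ0 hξ0ne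
  have hPcd : P.coeff d = a := by rw [ha, leadingCoeff, hdeg]
  have hpd : p.natDegree = d := by
    refine le_antisymm (hdeg ▸ natDegree_map_le) (le_natDegree_of_ne_zero ?_)
    rw [hp, coeff_map, hPcd]
    exact haξ0
  have hpne : p.coeff d ≠ 0 := by rw [hp, coeff_map, hPcd]; exact haξ0
  have hdodd : Odd d := by
    rcases Nat.eq_zero_or_pos d with h0 | hpos
    · exfalso
      have h1 := hskp (c/2)
      rw [show c - c/2 = c/2 by ring] at h1
      have hk0 : p.eval (c/2) = 0 := by
        have : (2:ℂ) * p.eval (c/2) = 0 := by linear_combination h1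
        simpa using this
      rw [h0] at hpd
      obtain ⟨k, hk⟩ := natDegree_eq_zero.mp hpd
      rw [← hk, eval_C] at hk0
      rw [← hk, h0] at hpne
      simp [hk0] at hpne
    · set q := p.comp (C c - X) with hq0
      have hq : q = -p := by
        refine Polynomial.funext fun z => ?_
        rw [hq0, eval_comp, eval_neg]
        simpa using hskp z
      have hdq : natDegree (C c - X) = 1 := by
        rw [show (C c - X : Polynomial ℂ) = -(X - C c) by ring, natDegree_neg,
          natDegree_X_sub_C]
      have hlcq : leadingCoeff (C c - X) = -1 := by
        rw [show (C c - X : Polynomial ℂ) = -(X - C c) by ring, leadingCoeff_neg,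
          (monic_X_sub_C c).leadingCoeff]
      have hcomp := leadingCoeff_comp (p := p) (q := C c - X) (by rw [hdq]; norm_num)
      rw [← hq0, hq, hlcq, hpd, leadingCoeff_neg] at hcomp
      have hlcp : p.leadingCoeff ≠ 0 := by
        rw [leadingCoeff, hpd]; exact hpne
      rcases Nat.even_or_odd d with he | ho
      · exfalso
        rw [he.neg_one_pow, mul_one] at hcomp
        have h2 : (2 : ℂ) * p.leadingCoeff = 0 := by linear_combination - hcomp
        rcases mul_eq_zero.mp h2 with h3 | h3
        · norm_num at h3
        · exact hlcp h3
      · exact ho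
  obtain ⟨N, hN⟩ := hdodd
  set P' := C (X^(3*N+3)) * P - C a * (Dp t * Ep t ^ N) with hP'
  have hDEd : (Dp t * Ep t ^ N).coeff d = X^(3*N+3) := by
    rw [hN, show 2*N+1 = (Dp t * Ep t ^ N).natDegree from (natDegree_DE t N).symm,
      ← leadingCoeff, leadingCoeff_DE]
  have hcoeffd : P'.coeff d = 0 := by
    rw [hP', coeff_sub, coeff_C_mul, coeff_C_mul, hDEd, hPcd]
    ring
  have hdegP' : P'.natDegree ≤ d := by
    refine le_trans (natDegree_sub_le _ _) (max_le ?_ ?_)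
    · refine le_trans natDegree_mul_le ?_
      rw [natDegree_C, hdeg]; omega
    · refine le_trans natDegree_mul_le ?_
      rw [natDegree_C, natDegree_DE, hN]; omega
  by_cases hP'0 : P' = 0
  · refine ⟨3*N+3, N, fun n => if n = N then a else 0, ?_⟩
    have heq : C (X^(3*N+3)) * P = C a * (Dp t * Ep t ^ N) := by
      have := sub_eq_zero.mp (hP' ▸ hP'0)
      exact this
    rw [heq, Finset.sum_eq_single N
      (fun b _ hb => by simp [hb])
      (fun hn => absurd (Finset.mem_range.mpr (Nat.lt_succ_self N)) hn)]
    simp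
    ring
  · have hlt : P'.natDegree < d := by
      refine lt_of_le_of_ne hdegP' fun h => ?_
      exact (leadingCoeff_ne_zero.mpr hP'0) (by rw [leadingCoeff, h]; exact hcoeffd)
    have hskP' : Skew t P' := by
      intro z ξ hξ
      have h1 := hsk z ξ hξ
      have hEinv : evv (8/ξ^3 + 2*t/ξ - z) ξ (Ep t) = evv z ξ (Ep t) := by
        rw [evv_Ep, evv_Ep]; field_simp; ring
      have hDneg : evv (8/ξ^3 + 2*t/ξ - z) ξ (Dp t) = -(evv z ξ (Dp t)) := by
        rw [evv_Dp, evv_Dp]; field_simp; ring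
      rw [hP']
      simp only [map_sub, map_mul, map_pow, evv_C, eval_pow, eval_X]
      rw [h1, hEinv, hDneg]
      ring
    obtain ⟨m', N', g', hrep⟩ := IH _ hlt P' rfl hskP'
    classical
    refine ⟨m' + (3*N+3), max N' N,
      fun n => (if n ≤ N' then g' n else 0) + (if n = N then X^m' * a else 0), ?_⟩
    have hstep : C (X^(m' + (3*N+3))) * P
        = Dp t * ∑ n ∈ Finset.range (N'+1), C (g' n) * Ep t ^ n
          + C (X^m' * a) * (Dp t * Ep t ^ N) := by
      rw [pow_add, C_mul, mul_assoc]
      have : C (X^(3*N+3)) * P = P' + C a * (Dp t * Ep t ^ N) := by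
        rw [hP']; ring
      rw [this, mul_add, hrep, C_mul]
      ring
    rw [hstep]
    have hsplit : ∑ n ∈ Finset.range (max N' N + 1),
        C ((if n ≤ N' then g' n else 0) + (if n = N then X^m' * a else 0)) * Ep t ^ n
        = (∑ n ∈ Finset.range (N'+1), C (g' n) * Ep t ^ n)
          + C (X^m' * a) * Ep t ^ N := by
      simp only [map_add, add_mul]
      rw [Finset.sum_add_distrib]
      congr 1
      · have hsub : Finset.range (N'+1) ⊆ Finset.range (max N' N + 1) :=
          Finset.range_subset_range.mpr (Nat.succ_le_succ (le_max_left N' N))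
        rw [← Finset.sum_subset hsub (fun n _ h2 => by
          rw [if_neg (fun hcon => h2 (Finset.mem_range.mpr (by omega))),
            map_zero, zero_mul])]
        refine Finset.sum_congr rfl fun n hn => ?_
        rw [if_pos (Nat.lt_succ_iff.mp (Finset.mem_range.mp hn))]
      · rw [Finset.sum_eq_single N
          (fun b _ hb => by simp [hb])
          (fun hn => absurd (Finset.mem_range.mpr
            (Nat.lt_succ_of_le (le_max_right N' N))) hn)]
        simp
    rw [hsplit, mul_add]
    ring


lemma remove (t : ℂ) : ∀ (m : ℕ) (P : S) (N : ℕ) (g : ℕ → R),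
    C (X^m) * P = Dp t * ∑ n ∈ Finset.range (N+1), C (g n) * Ep t ^ n →
    ∃ g' : ℕ → R, P = Dp t * ∑ n ∈ Finset.range (N+1), C (g' n) * Ep t ^ n := by
  intro m
  induction m with
  | zero => exact fun P N g h => ⟨g, by simpa using h⟩
  | succ m IH =>
    intro P N g h
    have h2 : C (X : R) * (C (X^m) * P)
        = Dp t * ∑ n ∈ Finset.range (N+1), C (g n) * Ep t ^ n := by
      rw [← h, ← mul_assoc, ← C_mul, ← pow_succ']
    obtain ⟨g1, hg1⟩ := div_xi t _ N g h2
    exact IH P N g1 hg1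

def φ : MvPolynomial (Fin 2) ℂ →+* S :=
  MvPolynomial.eval₂Hom (Polynomial.C.comp Polynomial.C) ![(X : S), C X]

lemma evv_phi (z ξ : ℂ) (G : MvPolynomial (Fin 2) ℂ) :
    evv z ξ (φ G) = MvPolynomial.eval ![z, ξ] G := by
  have h : (evv z ξ).comp φ = MvPolynomial.eval ![z, ξ] := by
    apply MvPolynomial.ringHom_ext
    · intro r
      simp [φ, evv]
    · intro i
      fin_cases i <;> simp [φ, evv]
  exact DFunLike.congr_fun h G

end SkewAux

end

open MvPolynomial

theorem skew_invariant_normal_form (t : ℂ) (G : MvPolynomial (Fin 2) ℂ)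
    (hskew : ∀ z ξ : ℂ, ξ ≠ 0 →
      eval ![8/ξ^3 + 2*t/ξ - z, ξ] G = -eval ![z, ξ] G) :
    ∃ (N : ℕ) (g : ℕ → Polynomial ℂ),
      ∀ z ξ : ℂ, eval ![z, ξ] G =
        (ξ^3 * z - t*ξ^2 - 4) *
          ∑ n ∈ Finset.range (N + 1),
            Polynomial.eval ξ (g n) * (z * (ξ^3 * z - 2*t*ξ^2 - 8))^n := by
  classical
  have hsk : SkewAux.Skew t (SkewAux.φ G) := by
    intro z ξ hξ
    rw [SkewAux.evv_phi, SkewAux.evv_phi]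
    exact hskew z ξ hξ
  obtain ⟨m, N, g, hrep⟩ := SkewAux.key t _ (SkewAux.φ G) rfl hsk
  obtain ⟨g1, hrep1⟩ := SkewAux.remove t m (SkewAux.φ G) N g hrep
  refine ⟨N, g1, fun z ξ => ?_⟩
  rw [← SkewAux.evv_phi, hrep1, map_mul, map_sum, SkewAux.evv_Dp]
  congr 1
  refine Finset.sum_congr rfl fun n _ => ?_
  rw [map_mul, map_pow, SkewAux.evv_C, SkewAux.evv_Ep]
end

section
/- Fix t ∈ ℂ and define D(x,y) = 4y² + 4x⁻¹y + x⁻² − x⁻¹(4x² + t)² for x ≠ 0. Let M, N ≥ 0 be integers, f₀, …, f_M ∈ ℂ[ξ], g₀, …, g_N ∈ ℂ[ξ] with g_N ≠ 0, and define for x ≠ 0: H⁺(x,y) = Σ_{m=0}^{M} f_m(x⁻¹) D(x,y)^m and H⁻(x,y) = (2x⁻²y + x⁻³) Σ_{n=0}^{N} g_n(x⁻¹) D(x,y)^n. If there exists a polynomial H ∈ ℂ[x,y] with H(x,y) = H⁺(x,y) + H⁻(x,y) for all x ≠ 0 and all y ∈ ℂ, then there exists an index m with N < m ≤ M and f_m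 ≠ 0; in particular M > N and the even part H⁺ is nontrivial. -/
/-!
Suppose `f m = 0` for all `N < m ≤ M`. For fixed `x ≠ 0`, `D(x, y)` is quadratic in `y` with leading
coefficient `4`, so both sums have degree at most `2N` in `y` and the coefficient of `y ^ (2N + 1)`
in `H(x, y)` is `2 x⁻² 4ᴺ g_N(x⁻¹)`. This coefficient is a polynomial in `x`; multiplying by
`x ^ (deg g_N + 2)` turns the identity into one between polynomials whose constant terms are `0`
and `2 · 4ᴺ` times the leading coefficient of `g_N`, so `g_N = 0`.
-/

namespace Polynomial

theorem Bivariate.evalEval_equivMvPolynomial_symm {R : Type*} [CommRing R]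
    (H : MvPolynomial (Fin 2) R) (x y : R) :
    ((equivMvPolynomial R).symm H).evalEval x y = MvPolynomial.eval ![x, y] H := by
  induction H using MvPolynomial.induction_on with
  | C a => simp
  | add p q hp hq => simp [hp, hq]
  | mul_X p i hp => fin_cases i <;> simp [hp, evalEval_C]

section CommRing

variable {R : Type*} [CommRing R]

theorem natDegree_sum_C_mul_pow_le (a : ℕ → R) (D : R[X]) {s : Finset ℕ} {N : ℕ}
    (ha : ∀ n ∈ s, N < n → a n = 0) :
    (∑ n ∈ s, C (a n) * D ^ n).natDegree ≤ N * D.natDegree := by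
  refine natDegree_sum_le_of_forall_le _ _ fun n hn => ?_
  by_cases hnN : n ≤ N
  · exact natDegree_C_mul_le _ _ |>.trans <| natDegree_pow_le.trans <|
      Nat.mul_le_mul_right _ hnN
  · simp [ha n hn (not_le.mp hnN)]

theorem coeff_sum_range_C_mul_pow (a : ℕ → R) {D : R[X]} (hD : 0 < D.natDegree) (N : ℕ) :
    (∑ n ∈ Finset.range (N + 1), C (a n) * D ^ n).coeff (N * D.natDegree) =
      a N * D.leadingCoeff ^ N := by
  have hlow : ∀ n ∈ Finset.range N, (C (a n) * D ^ n).coeff (N * D.natDegree) = 0 := by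
    intro n hn
    refine coeff_eq_zero_of_natDegree_lt <| (natDegree_C_mul_le _ _).trans_lt <|
      natDegree_pow_le.trans_lt ?_
    exact Nat.mul_lt_mul_of_pos_right (Finset.mem_range.mp hn) hD
  rw [Finset.sum_range_succ, coeff_add, finsetSum_coeff, Finset.sum_eq_zero hlow, zero_add,
    coeff_C_mul, coeff_pow_mul_natDegree]

theorem coeff_add_linear_mul_succ {p q : R[X]} {n : ℕ} (hp : p.natDegree ≤ n)
    (hq : q.natDegree ≤ n) (u v : R) :
    (p + (C u * X + C v) * q).coeff (n + 1) = u * q.coeff n := by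
  have hq' : q.coeff (n + 1) = 0 := coeff_eq_zero_of_natDegree_lt (Nat.lt_succ_of_le hq)
  rw [coeff_add, coeff_eq_zero_of_natDegree_lt (Nat.lt_succ_of_le hp), add_mul, coeff_add,
    mul_assoc, coeff_C_mul, coeff_X_mul, coeff_C_mul, hq']
  ring

theorem eval_coeff_of_evalEval_eq [IsDomain R] [Infinite R] {P : R[X][X]} {x : R}
    {D : R[X]} (hD : 0 < D.natDegree) {M N : ℕ} {a b : ℕ → R}
    (ha : ∀ m ∈ Finset.range (M + 1), N < m → a m = 0) (u v : R)
    (hP : ∀ y, P.evalEval x y =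
      (∑ m ∈ Finset.range (M + 1), a m * D.eval y ^ m) +
        (u * y + v) * ∑ n ∈ Finset.range (N + 1), b n * D.eval y ^ n) :
    (P.coeff (N * D.natDegree + 1)).eval x = u * (b N * D.leadingCoeff ^ N) := by
  have hfiber : P.map (evalRingHom x) =
      (∑ m ∈ Finset.range (M + 1), C (a m) * D ^ m) +
        (C u * X + C v) * ∑ n ∈ Finset.range (N + 1), C (b n) * D ^ n := by
    refine Polynomial.funext fun y => ?_
    simp [map_evalRingHom_eval, hP, eval_finsetSum]
  have hb : ∀ n ∈ Finset.range (N + 1), N < n → b n = 0 := fun n hn hNn =>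
    absurd (Finset.mem_range_succ_iff.mp hn) (not_le.mpr hNn)
  rw [← coe_evalRingHom, ← coeff_map, hfiber,
    coeff_add_linear_mul_succ (natDegree_sum_C_mul_pow_le a D ha)
      (natDegree_sum_C_mul_pow_le b D hb), coeff_sum_range_C_mul_pow b hD]

end CommRing

theorem eq_zero_of_eval_eq_inv_pow_mul_eval_inv {K : Type*} [Field K] [Infinite K]
    {p g : K[X]} {k : ℕ} (h : ∀ x ≠ 0, p.eval x = x⁻¹ ^ (k + 1) * g.eval x⁻¹) : g = 0 := by
  have hrev : X ^ (g.natDegree + k + 1) * p = g.reverse := by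
    refine eq_of_infinite_eval_eq _ _ <| (Set.finite_singleton 0).infinite_compl.mono ?_
    intro x (hx : x ≠ 0)
    have : Invertible x⁻¹ := invertibleOfNonzero (inv_ne_zero hx)
    have hg := eval₂_reverse_mul_pow (RingHom.id K) x⁻¹ g
    rw [invOf_eq_inv, inv_inv] at hg
    change g.reverse.eval x * x⁻¹ ^ g.natDegree = g.eval x⁻¹ at hg
    rw [Set.mem_ofPred_eq, eval_mul, eval_pow, eval_X, h x hx, ← hg, add_assoc, pow_add,
      inv_pow, inv_pow]
    field_simp
  simpa [coeff_zero_reverse] using (congr_arg (coeff · 0) hrev).symm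

end Polynomial

open Polynomial in
/-- The paper's `D(x, y)` as a polynomial in `y`. -/
noncomputable def invariantPoly (t x : ℂ) : ℂ[X] :=
  C 4 * X ^ 2 + C (4 * x⁻¹) * X + C (x⁻¹ ^ 2 - x⁻¹ * (4 * x ^ 2 + t) ^ 2)

open Polynomial in
theorem eval_invariantPoly (t x y : ℂ) : (invariantPoly t x).eval y =
    4 * y ^ 2 + 4 * x⁻¹ * y + x⁻¹ ^ 2 - x⁻¹ * (4 * x ^ 2 + t) ^ 2 := by
  simp only [invariantPoly, eval_add, eval_mul, eval_pow, eval_C, eval_X]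
  ring

theorem natDegree_invariantPoly (t x : ℂ) : (invariantPoly t x).natDegree = 2 :=
  Polynomial.natDegree_quadratic (by norm_num)

theorem leadingCoeff_invariantPoly (t x : ℂ) : (invariantPoly t x).leadingCoeff = 4 :=
  Polynomial.leadingCoeff_quadratic (by norm_num)

open MvPolynomial

theorem even_degree_exceeds_odd_degree (t : ℂ) (M N : ℕ)
    (f g : ℕ → Polynomial ℂ) (hg : g N ≠ 0)
    (H : MvPolynomial (Fin 2) ℂ)
    (hH : ∀ x y : ℂ, x ≠ 0 →
      eval ![x, y] H =
        (∑ m ∈ Finset.range (M + 1), Polynomial.eval x⁻¹ (f m) *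
          (4*y^2 + 4*x⁻¹*y + x⁻¹^2 - x⁻¹*(4*x^2 + t)^2)^m) +
        (2*x⁻¹^2*y + x⁻¹^3) *
          ∑ n ∈ Finset.range (N + 1), Polynomial.eval x⁻¹ (g n) *
            (4*y^2 + 4*x⁻¹*y + x⁻¹^2 - x⁻¹*(4*x^2 + t)^2)^n) :
    ∃ m : ℕ, N < m ∧ m ≤ M ∧ f m ≠ 0 := by
  by_contra! hf
  set P := (Polynomial.Bivariate.equivMvPolynomial ℂ).symm H with hP
  have hcoeff : ∀ x ≠ 0, (P.coeff (N * 2 + 1)).eval x =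
      x⁻¹ ^ (1 + 1) * ((2 * 4 ^ N : ℂ) • g N).eval x⁻¹ := by
    intro x hx
    have hfiber := Polynomial.eval_coeff_of_evalEval_eq (P := P) (x := x)
      (D := invariantPoly t x) (natDegree_invariantPoly t x ▸ two_pos)
      (a := fun m => (f m).eval x⁻¹) (b := fun n => (g n).eval x⁻¹)
      (fun m hm hNm => by rw [hf m hNm (Finset.mem_range_succ_iff.mp hm), Polynomial.eval_zero])
      (2 * x⁻¹ ^ 2) (x⁻¹ ^ 3) fun y => by
        simpa only [hP, Polynomial.Bivariate.evalEval_equivMvPolynomial_symm, eval_invariantPoly]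
          using hH x y hx
    rw [natDegree_invariantPoly, leadingCoeff_invariantPoly] at hfiber
    rw [hfiber, Polynomial.eval_smul, smul_eq_mul]
    ring
  have hgN := Polynomial.eq_zero_of_eval_eq_inv_pow_mul_eval_inv hcoeff
  exact hg <| (smul_eq_zero.mp hgN).resolve_left (by norm_num)
end

section
/- Fix t ∈ ℂ and define D(x,y) = 4y² + 4x⁻¹y + x⁻² − x⁻¹(4x² + t)² for x ≠ 0. Let M, N ≥ 0 be integers, f₀, …, f_M ∈ ℂ[ξ] and g₀, …, g_N ∈ ℂ[ξ], and define for x ≠ 0: H⁺(x,y) = Σ_{m=0}^{M} f_m(x⁻¹) D(x,y)^m and H⁻(x,y) = (2x⁻²y + x⁻³) Σ_{n=0}^{N} g_n(x⁻¹) D(x,y)^n. If there exists a polynomial H ∈ ℂ[x,y] with H(x,y) = H⁺(x,y) + H⁻(x,y) for all x ≠ 0 and all y ∈ ℂ, then H is a constant polynomial; equivalently, there is c ∈ ℂ with H⁺(x,y) + H⁻(x,y) = c for all x ≠ 0 and y ∈ ℂ. -/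
/-!
View `H` as a polynomial in `y` whose coefficients are polynomials in `x`. For fixed `x ≠ 0` the
right-hand side is `∑ fₘ(x⁻¹) Dᵐ + Δ ∑ gₙ(x⁻¹) Dⁿ`, where `D` is quadratic in `y` with leading
coefficient `4` and `Δ = 2x⁻²y + x⁻³` is linear, so its summands have pairwise distinct degrees in
`y`. A polynomial in `x` that agrees with a polynomial in `x⁻¹` on `x ≠ 0` is constant. If the top
degree is odd, `2n + 1`, the coefficient of `y^(2n+1)` in `H` is `2 · 4ⁿ x⁻² gₙ(x⁻¹)`, hence
`gₙ = 0`. If it is even, `2m ≥ 2`, the top coefficient forces `fₘ` to be a constant `a`, and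
then the coefficient of `y^(2m-1)`, which is `m 4ᵐ a x⁻¹ + x⁻² r(x⁻¹)`, forces `a = 0`. Peeling
off top terms leaves `H(x, y) = f₀(x⁻¹)`, which is constant.
-/

open scoped Polynomial
open Finset

namespace Polynomial

section Inversion

variable {K : Type*} [Field K] [Infinite K]

theorem natDegree_eq_zero_of_eval_eq_eval_inv {p q : K[X]}
    (h : ∀ x ≠ 0, p.eval x = q.eval x⁻¹) : p.natDegree = 0 := by
  set n := q.natDegree
  have hreflect : X ^ n * p = reflect n q := by
    refine eq_of_infinite_eval_eq _ _ ((Set.finite_singleton 0).infinite_compl.mono ?_)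
    intro x (hx : x ≠ 0)
    have : Invertible x⁻¹ := invertibleOfNonzero (inv_ne_zero hx)
    have hrefl := eval₂_reflect_mul_pow (RingHom.id K) x⁻¹ n q le_rfl
    simp only [eval₂_id, invOf_eq_inv, inv_inv] at hrefl
    show (X ^ n * p).eval x = (reflect n q).eval x
    rw [eval_mul, eval_pow, eval_X, h x hx, ← hrefl, inv_pow]
    field_simp
  by_contra hp
  have hp0 : p ≠ 0 := by rintro rfl; simp at hp
  have := natDegree_reflect_le (N := n) (p := q)
  rw [← hreflect, natDegree_X_pow_mul n hp0] at this
  omega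

theorem exists_eq_C_of_eval_eq_eval_inv {p q : K[X]}
    (h : ∀ x ≠ 0, p.eval x = q.eval x⁻¹) : ∃ c, p = C c ∧ q = C c := by
  have h' : ∀ x ≠ 0, q.eval x = p.eval x⁻¹ := fun x hx => by
    rw [h x⁻¹ (inv_ne_zero hx), inv_inv]
  obtain ⟨a, rfl⟩ := natDegree_eq_zero.mp (natDegree_eq_zero_of_eval_eq_eval_inv h)
  obtain ⟨b, rfl⟩ := natDegree_eq_zero.mp (natDegree_eq_zero_of_eval_eq_eval_inv h')
  exact ⟨a, rfl, by simpa using (h 1 one_ne_zero).symm⟩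

theorem exists_eq_C_C_of_map_eq_C {P : K[X][X]} {p : K[X]}
    (hP : ∀ x ≠ 0, P.map (evalRingHom x) = C (p.eval x⁻¹)) : ∃ c, P = C (C c) := by
  have hcoeff : ∀ j, ∀ x ≠ 0, (P.coeff j).eval x = (if j = 0 then p else 0).eval x⁻¹ := by
    intro j x hx
    rw [← coe_evalRingHom, ← coeff_map, hP x hx, coeff_C, apply_ite (eval x⁻¹), eval_zero]
  obtain ⟨c, hc, -⟩ := exists_eq_C_of_eval_eq_eval_inv (hcoeff 0)
  refine ⟨c, ext fun j => ?_⟩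
  rcases eq_or_ne j 0 with rfl | hj
  · rw [hc, coeff_C_zero]
  · obtain ⟨d, hd, hd0⟩ := exists_eq_C_of_eval_eq_eval_inv (hcoeff j)
    rw [if_neg hj, eq_comm, C_eq_zero] at hd0
    rw [hd, hd0, coeff_C_of_ne_zero hj, C_0]

end Inversion

variable {R : Type*} [CommRing R]

theorem coeff_mul_of_natDegree_le_two {p q : R[X]} (hq : q.natDegree ≤ 2) (k : ℕ) :
    (p * q).coeff (k + 2) =
      p.coeff k * q.coeff 2 + p.coeff (k + 1) * q.coeff 1 + p.coeff (k + 2) * q.coeff 0 := by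
  conv_lhs => rw [as_sum_range' q 3 (by omega)]
  simp only [sum_range_succ, sum_range_zero, zero_add, mul_add, coeff_add,
    ← C_mul_X_pow_eq_monomial, ← mul_assoc, coeff_mul_X_pow', coeff_mul_C]
  simp only [le_add_iff_nonneg_left, zero_le, ↓reduceIte, tsub_zero, Nat.add_one_sub_one,
    add_tsub_cancel_right]
  ring

theorem coeff_pow_succ_two_mul_add_one {q : R[X]} (hq : q.natDegree ≤ 2) (m : ℕ) :
    (q ^ (m + 1)).coeff (2 * m + 1) = (m + 1) * q.coeff 2 ^ m * q.coeff 1 := by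
  induction m with
  | zero => simp
  | succ m ih =>
    rw [pow_succ, show 2 * (m + 1) + 1 = (2 * m + 1) + 2 by ring,
      coeff_mul_of_natDegree_le_two hq, ih, show 2 * m + 1 + 1 = (m + 1) * 2 by ring,
      coeff_pow_of_natDegree_le hq, coeff_eq_zero_of_natDegree_lt
        ((natDegree_pow_le_of_le (m + 1) hq).trans_lt (by omega))]
    push_cast
    ring

theorem natDegree_C_mul_pow_le {q : R[X]} (hq : q.natDegree ≤ 2) (m : ℕ) {a : R} :
    (C a * q ^ m).natDegree ≤ 2 * m :=
  (natDegree_C_mul_le _ _).trans (by simpa [mul_comm] using natDegree_pow_le_of_le m hq)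

section NormalForm

noncomputable def normalForm (q ℓ : R[X]) (u v : ℕ → R) (M N : ℕ) : R[X] :=
  ∑ m ∈ range M, C (u m) * q ^ m + ℓ * ∑ n ∈ range N, C (v n) * q ^ n

variable {q ℓ : R[X]} {u v : ℕ → R} {M N j : ℕ}

theorem normalForm_succ_left (q ℓ : R[X]) (u v : ℕ → R) (M N : ℕ) :
    normalForm q ℓ u v (M + 1) N = normalForm q ℓ u v M N + C (u M) * q ^ M := by
  rw [normalForm, normalForm, sum_range_succ]
  ring

theorem normalForm_succ_right (q ℓ : R[X]) (u v : ℕ → R) (M N : ℕ) :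
    normalForm q ℓ u v M (N + 1) = normalForm q ℓ u v M N + ℓ * (C (v N) * q ^ N) := by
  rw [normalForm, normalForm, sum_range_succ]
  ring

theorem coeff_normalForm_eq_zero (hq : q.natDegree ≤ 2) (hℓ : ℓ.natDegree ≤ 1)
    (hM : 2 * M ≤ j + 1) (hN : 2 * N ≤ j) : (normalForm q ℓ u v M N).coeff j = 0 := by
  rw [normalForm, mul_sum, coeff_add, finsetSum_coeff, finsetSum_coeff, sum_eq_zero, sum_eq_zero,
    add_zero] <;> intro i hi <;> rw [mem_range] at hi <;> apply coeff_eq_zero_of_natDegree_lt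
  · calc (ℓ * (C (v i) * q ^ i)).natDegree ≤ 1 + 2 * i :=
          natDegree_mul_le_of_le hℓ (natDegree_C_mul_pow_le hq i)
      _ < j := by omega
  · calc (C (u i) * q ^ i).natDegree ≤ 2 * i := natDegree_C_mul_pow_le hq i
      _ < j := by omega

theorem coeff_normalForm_odd_top (hq : q.natDegree ≤ 2) (hℓ : ℓ.natDegree ≤ 1)
    (hMN : M ≤ N + 1) :
    (normalForm q ℓ u v M (N + 1)).coeff (2 * N + 1) = ℓ.coeff 1 * v N * q.coeff 2 ^ N := by
  rw [normalForm_succ_right, coeff_add, coeff_normalForm_eq_zero hq hℓ (by omega) (by omega),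
    zero_add, add_comm, coeff_mul_add_eq_of_natDegree_le hℓ (natDegree_C_mul_pow_le hq N),
    coeff_C_mul, mul_comm 2 N, coeff_pow_of_natDegree_le hq, mul_assoc]

theorem coeff_normalForm_even_top (hq : q.natDegree ≤ 2) (hℓ : ℓ.natDegree ≤ 1) (hNM : N ≤ M) :
    (normalForm q ℓ u v (M + 1) N).coeff (2 * M) = u M * q.coeff 2 ^ M := by
  rw [normalForm_succ_left, coeff_add, coeff_normalForm_eq_zero hq hℓ (by omega) (by omega),
    zero_add, coeff_C_mul, mul_comm 2 M, coeff_pow_of_natDegree_le hq]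

theorem coeff_normalForm_even_subleading (hq : q.natDegree ≤ 2) :
    (normalForm q ℓ u v (M + 2) N).coeff (2 * M + 1) =
      (normalForm q ℓ u v (M + 1) N).coeff (2 * M + 1) +
        u (M + 1) * ((M + 1) * q.coeff 2 ^ M * q.coeff 1) := by
  rw [normalForm_succ_left, coeff_add, coeff_C_mul, coeff_pow_succ_two_mul_add_one hq]

end NormalForm

end Polynomial

open Polynomial in
theorem MvPolynomial.eval_equivMvPolynomial {R : Type*} [CommRing R] (P : R[X][X]) (x y : R) :
    eval ![x, y] (Bivariate.equivMvPolynomial R P) = P.evalEval x y := by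
  have : (aeval ![x, y]).comp (Bivariate.equivMvPolynomial R : R[X][X] →ₐ[R] _) =
      aevalAeval x y := by
    ext <;> simp
  rw [← coe_aevalAeval_eq_evalEval, ← this, AlgHom.comp_apply]
  rfl

namespace Painleve

open Polynomial

noncomputable def polyD (t x : ℂ) : ℂ[X] :=
  C 4 * X ^ 2 + C (4 * x⁻¹) * X + C (x⁻¹ ^ 2 - x⁻¹ * (4 * x ^ 2 + t) ^ 2)

noncomputable def polyΔ (x : ℂ) : ℂ[X] := C (2 * x⁻¹ ^ 2) * X + C (x⁻¹ ^ 3)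

noncomputable def normalFormAt (t : ℂ) (f g : ℕ → ℂ[X]) (M N : ℕ) (x : ℂ) : ℂ[X] :=
  normalForm (polyD t x) (polyΔ x) (fun m => (f m).eval x⁻¹) (fun n => (g n).eval x⁻¹) M N

theorem natDegree_polyD_le (t x : ℂ) : (polyD t x).natDegree ≤ 2 := by
  unfold polyD; compute_degree

theorem natDegree_polyΔ_le (x : ℂ) : (polyΔ x).natDegree ≤ 1 := by
  unfold polyΔ; compute_degree

@[simp] theorem coeff_polyD_two (t x : ℂ) : (polyD t x).coeff 2 = 4 := by
  simp only [polyD, coeff_add, coeff_C_mul, coeff_X_pow, coeff_X, coeff_C]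
  norm_num

@[simp] theorem coeff_polyD_one (t x : ℂ) : (polyD t x).coeff 1 = 4 * x⁻¹ := by
  simp only [polyD, coeff_add, coeff_C_mul, coeff_X_pow, coeff_X, coeff_C]
  norm_num

@[simp] theorem coeff_polyΔ_one (x : ℂ) : (polyΔ x).coeff 1 = 2 * x⁻¹ ^ 2 := by simp [polyΔ]

theorem eval_normalFormAt (t : ℂ) (f g : ℕ → ℂ[X]) (M N : ℕ) (x y : ℂ) :
    (normalFormAt t f g M N x).eval y =
      (∑ m ∈ range M, (f m).eval x⁻¹ * (4*y^2 + 4*x⁻¹*y + x⁻¹^2 - x⁻¹*(4*x^2 + t)^2)^m) +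
      (2*x⁻¹^2*y + x⁻¹^3) *
        ∑ n ∈ range N, (g n).eval x⁻¹ * (4*y^2 + 4*x⁻¹*y + x⁻¹^2 - x⁻¹*(4*x^2 + t)^2)^n := by
  simp only [normalFormAt, normalForm, polyD, polyΔ, eval_add, eval_mul, eval_pow, eval_C,
    eval_X, eval_finsetSum, add_sub_assoc]

variable {t : ℂ} {f g : ℕ → ℂ[X]} {P : ℂ[X][X]} {M N : ℕ}

theorem eval_coeff_eq_coeff_normalFormAt
    (hP : ∀ x ≠ 0, P.map (evalRingHom x) = normalFormAt t f g M N x) {x : ℂ} (hx : x ≠ 0)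
    (j : ℕ) : (P.coeff j).eval x = (normalFormAt t f g M N x).coeff j := by
  rw [← hP x hx, coeff_map, coe_evalRingHom]

theorem eq_zero_of_map_eq_normalFormAt_odd_top
    (hP : ∀ x ≠ 0, P.map (evalRingHom x) = normalFormAt t f g M (N + 1) x) (hMN : M ≤ N + 1) :
    g N = 0 := by
  have key : ∀ x ≠ 0, (P.coeff (2 * N + 1)).eval x = (X ^ 2 * (C (2 * 4 ^ N) * g N)).eval x⁻¹ := by
    intro x hx
    rw [eval_coeff_eq_coeff_normalFormAt hP hx, normalFormAt,
      coeff_normalForm_odd_top (natDegree_polyD_le t x) (natDegree_polyΔ_le x) hMN]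
    simp only [coeff_polyΔ_one, inv_pow, coeff_polyD_two, map_mul, map_pow, eval_mul, eval_pow,
      eval_X, eval_C]
    ring
  obtain ⟨c, -, hc⟩ := exists_eq_C_of_eval_eq_eval_inv key
  ext k
  have hk := congrArg (coeff · (k + 2)) hc
  simp only [coeff_X_pow_mul, coeff_C_mul, coeff_C, Nat.add_eq_zero_iff, OfNat.ofNat_ne_zero,
    and_false, if_false, mul_eq_zero, pow_eq_zero_iff', false_and, or_false] at hk
  simpa using hk

theorem exists_eq_C_of_map_eq_normalFormAt_even_top
    (hP : ∀ x ≠ 0, P.map (evalRingHom x) = normalFormAt t f g (M + 1) N x) (hNM : N ≤ M) :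
    ∃ a, f M = C a := by
  have key : ∀ x ≠ 0, (P.coeff (2 * M)).eval x = (C (4 ^ M) * f M).eval x⁻¹ := by
    intro x hx
    rw [eval_coeff_eq_coeff_normalFormAt hP hx, normalFormAt,
      coeff_normalForm_even_top (natDegree_polyD_le t x) (natDegree_polyΔ_le x) hNM]
    simp only [coeff_polyD_two, map_pow, eval_mul, eval_pow, eval_C]
    ring
  obtain ⟨c, -, hc⟩ := exists_eq_C_of_eval_eq_eval_inv key
  refine ⟨c / 4 ^ M, ?_⟩
  rw [div_eq_inv_mul, C_mul, ← hc, ← mul_assoc, ← C_mul, inv_mul_cancel₀ (by norm_num), C_1,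
    one_mul]

theorem eq_zero_of_map_eq_normalFormAt_even_top
    (hP : ∀ x ≠ 0, P.map (evalRingHom x) = normalFormAt t f g (M + 2) N x) (hNM : N ≤ M + 1) :
    f (M + 1) = 0 := by
  obtain ⟨a, ha⟩ := exists_eq_C_of_map_eq_normalFormAt_even_top hP hNM
  obtain ⟨r, hr⟩ : ∃ r : ℂ[X], ∀ x,
      (normalFormAt t f g (M + 1) N x).coeff (2 * M + 1) = x⁻¹ ^ 2 * r.eval x⁻¹ := by
    rcases hNM.lt_or_eq with hlt | rfl
    · refine ⟨0, fun x => ?_⟩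
      rw [normalFormAt, coeff_normalForm_eq_zero (natDegree_polyD_le t x) (natDegree_polyΔ_le x)
        (by omega) (by omega), eval_zero, mul_zero]
    · refine ⟨C (2 * 4 ^ M) * g M, fun x => ?_⟩
      rw [normalFormAt, coeff_normalForm_odd_top (natDegree_polyD_le t x) (natDegree_polyΔ_le x)
        le_rfl]
      simp only [coeff_polyΔ_one, inv_pow, coeff_polyD_two, map_mul, map_pow, eval_mul, eval_C,
        eval_pow]
      ring
  have key : ∀ x ≠ 0, (P.coeff (2 * M + 1)).eval x =
      (C ((M + 1) * 4 ^ (M + 1) * a) * X + X ^ 2 * r).eval x⁻¹ := by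
    intro x hx
    rw [eval_coeff_eq_coeff_normalFormAt hP hx, normalFormAt,
      coeff_normalForm_even_subleading (natDegree_polyD_le t x), ← normalFormAt, hr, ha]
    simp only [inv_pow, eval_C, coeff_polyD_two, coeff_polyD_one, map_mul, map_add, map_natCast,
      map_one, map_pow, eval_add, eval_mul, eval_natCast, eval_one, eval_pow, eval_X]
    ring
  obtain ⟨c, -, hc⟩ := exists_eq_C_of_eval_eq_eval_inv key
  have h1 := congrArg (coeff · 1) hc
  simp only [coeff_add, coeff_C_mul, coeff_X_one, coeff_X_pow_mul', coeff_C] at h1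
  have ha0 : ((M + 1) * 4 ^ (M + 1) : ℂ) * a = 0 := by simpa using h1
  rw [ha, (mul_eq_zero.mp ha0).resolve_left
    (mul_ne_zero (Nat.cast_add_one_ne_zero M) (pow_ne_zero _ (by norm_num))), C_0]

theorem exists_eq_C_C_of_map_eq_normalFormAt {M N : ℕ}
    (hP : ∀ x ≠ 0, P.map (evalRingHom x) = normalFormAt t f g M N x) : ∃ c, P = C (C c) := by
  by_cases hf : 2 ≤ M ∧ N < M
  · obtain ⟨M, rfl⟩ : ∃ M', M = M' + 2 := ⟨M - 2, by omega⟩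
    have hfM := eq_zero_of_map_eq_normalFormAt_even_top hP (by omega)
    refine exists_eq_C_C_of_map_eq_normalFormAt (M := M + 1) (N := N)
      fun x hx => ?_
    rw [hP x hx, normalFormAt, normalForm_succ_left, hfM, eval_zero, C_0, zero_mul, add_zero]
    rfl
  rcases Nat.eq_zero_or_pos N with rfl | hN
  · obtain rfl | rfl : M = 0 ∨ M = 1 := by omega
    · exact exists_eq_C_C_of_map_eq_C (p := 0) fun x hx => by
        simp [hP x hx, normalFormAt, normalForm]
    · exact exists_eq_C_C_of_map_eq_C (p := f 0) fun x hx => by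
        simp [hP x hx, normalFormAt, normalForm]
  · obtain ⟨N, rfl⟩ : ∃ N', N = N' + 1 := ⟨N - 1, by omega⟩
    have hgN := eq_zero_of_map_eq_normalFormAt_odd_top hP (by omega)
    refine exists_eq_C_C_of_map_eq_normalFormAt (M := M) (N := N)
      fun x hx => ?_
    rw [hP x hx, normalFormAt, normalForm_succ_right, hgN, eval_zero, C_0, zero_mul, mul_zero,
      add_zero]
    rfl
termination_by M + N

end Painleve

open MvPolynomial

theorem normal_form_polynomial_is_constant (t : ℂ) (M N : ℕ)
    (f g : ℕ → Polynomial ℂ)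
    (H : MvPolynomial (Fin 2) ℂ)
    (hH : ∀ x y : ℂ, x ≠ 0 →
      eval ![x, y] H =
        (∑ m ∈ Finset.range (M + 1), Polynomial.eval x⁻¹ (f m) *
          (4*y^2 + 4*x⁻¹*y + x⁻¹^2 - x⁻¹*(4*x^2 + t)^2)^m) +
        (2*x⁻¹^2*y + x⁻¹^3) *
          ∑ n ∈ Finset.range (N + 1), Polynomial.eval x⁻¹ (g n) *
            (4*y^2 + 4*x⁻¹*y + x⁻¹^2 - x⁻¹*(4*x^2 + t)^2)^n) :
    ∃ c : ℂ, H = C c ∧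
      ∀ x y : ℂ, x ≠ 0 →
        (∑ m ∈ Finset.range (M + 1), Polynomial.eval x⁻¹ (f m) *
          (4*y^2 + 4*x⁻¹*y + x⁻¹^2 - x⁻¹*(4*x^2 + t)^2)^m) +
        (2*x⁻¹^2*y + x⁻¹^3) *
          (∑ n ∈ Finset.range (N + 1), Polynomial.eval x⁻¹ (g n) *
            (4*y^2 + 4*x⁻¹*y + x⁻¹^2 - x⁻¹*(4*x^2 + t)^2)^n) = c := by
  obtain ⟨P, rfl⟩ := (Polynomial.Bivariate.equivMvPolynomial ℂ).surjective H
  have hP : ∀ x ≠ 0,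
      P.map (Polynomial.evalRingHom x) = Painleve.normalFormAt t f g (M + 1) (N + 1) x :=
    fun x hx => Polynomial.funext fun y => by
      rw [Polynomial.map_evalRingHom_eval, ← eval_equivMvPolynomial, hH x y hx,
        Painleve.eval_normalFormAt]
  obtain ⟨c, rfl⟩ := Painleve.exists_eq_C_C_of_map_eq_normalFormAt hP
  refine ⟨c, Polynomial.Bivariate.equivMvPolynomial_C_C, fun x y hx => ?_⟩
  rw [← hH x y hx, Polynomial.Bivariate.equivMvPolynomial_C_C, eval_C]
end
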